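/- arXiv:1006.4623 — 7 statements merged into one kernel-verified Lean document; each statement's English description precedes it below -/
import Mathlib

section
/- Let U be a finite-dimensional complex vector space and Z ∈ End(U) a semisimple endomorphism, written Z = Σ_{a=1}^m z_a·P_a where z₁,…,z_m are distinct complex numbers and P₁,…,P_m ∈ End(U) are nonzero projections with P_aP_b = δ_{ab}P_a and P₁+⋯+P_m = id. Let θ₁, θ₂ be real numbers with |θ₁ − θ₂| < π, and let Σ̄ = {s₁e^{iθ₁} + s₂e^{iθ₂} : s₁, s₂ ≥ 0} ∖ {0} be the closed convex sector bounded by the rays ℝ_{>0}e^{iθ₁} and ℝ_{>0}e^{iθ₂}. Suppose u ∈ U satisfies exp(−Z/t)·u → 0 as t → 0 within H_{θ₁} ∩ H_{θ₂}. Then P_a u = 0 for every index a such that z_a ∉ Σ̄; that is, u lies in the span of the eigenspaces of Z corresponding to eigenvalues lying in Σ̄. -/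
/-!
Since `P a * Z = z a • P a`, the projection intertwines the exponential:
`P a (exp (-t⁻¹ • Z) u) = exp (-z a / t) • P a u`. If `z a` lies outside the sector, there is a
direction `e^{iψ}` in `H_{θ₁} ∩ H_{θ₂}` with `Re (z a * e^{-iψ}) ≤ 0`; along the ray
`t = s e^{iψ}`, `s → 0⁺`, the factor `exp (-z a / t)` then has modulus at least one, so
`‖P a u‖ ≤ ‖P a (exp (-t⁻¹ • Z) u)‖ → 0`.

To find `ψ` when `θ₂ ≤ θ₁ < θ₂ + π`, reduce `arg (z a)` modulo `2π` to `α ∈ [θ₂, θ₂ + 2π)`.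
Since `z a` is outside the sector, `α > θ₁`, and one of `ψ = α - π/2`, `ψ = (θ₁ + θ₂)/2`,
`ψ = α - 3π/2` makes `ψ - θ₁, ψ - θ₂ ∈ (-π/2, π/2)` and `α - ψ ∈ [π/2, 3π/2]`.
-/

open Complex Filter Topology

def halfPlane (θ : ℝ) : Set ℂ := {t : ℂ | 0 < (t * exp (-(θ : ℂ) * I)).re}

-- The sector `Σ̄` of the statement is `sectorCone θ₁ θ₂ \ {0}`.
def sectorCone (θ₁ θ₂ : ℝ) : Set ℂ :=
  {w : ℂ | ∃ s₁ s₂ : ℝ, 0 ≤ s₁ ∧ 0 ≤ s₂ ∧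
    w = (s₁ : ℂ) * exp ((θ₁ : ℂ) * I) + (s₂ : ℂ) * exp ((θ₂ : ℂ) * I)}

theorem sectorCone_comm (θ₁ θ₂ : ℝ) : sectorCone θ₁ θ₂ = sectorCone θ₂ θ₁ := by
  ext w
  constructor <;>
  · rintro ⟨s₁, s₂, h₁, h₂, rfl⟩
    exact ⟨s₂, s₁, h₂, h₁, add_comm _ _⟩

theorem sin_sub_mul_exp_add_sin_sub_mul_exp (α θ₁ θ₂ : ℝ) :
    (Real.sin (α - θ₂) : ℂ) * exp (θ₁ * I) + (Real.sin (θ₁ - α) : ℂ) * exp (θ₂ * I)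
      = (Real.sin (θ₁ - θ₂) : ℂ) * exp (α * I) := by
  apply Complex.ext <;>
  · simp only [add_re, add_im, re_ofReal_mul, im_ofReal_mul, exp_ofReal_mul_I_re,
      exp_ofReal_mul_I_im, Real.sin_sub]
    ring

theorem ofReal_mul_exp_mem_sectorCone {θ₁ θ₂ α r : ℝ} (hθ : θ₁ < θ₂ + Real.pi)
    (hα : α ∈ Set.Icc θ₂ θ₁) (hr : 0 ≤ r) : (r : ℂ) * exp (α * I) ∈ sectorCone θ₁ θ₂ := by
  obtain ⟨hα₂, hα₁⟩ := hα
  obtain rfl | hαθ := hα₁.eq_or_lt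
  · exact ⟨r, 0, hr, le_rfl, by simp⟩
  have hsin : 0 < Real.sin (θ₁ - θ₂) :=
    Real.sin_pos_of_pos_of_lt_pi (by linarith) (by linarith)
  have hsin₁ : 0 ≤ Real.sin (α - θ₂) :=
    Real.sin_nonneg_of_nonneg_of_le_pi (by linarith) (by linarith)
  have hsin₂ : 0 ≤ Real.sin (θ₁ - α) :=
    Real.sin_nonneg_of_nonneg_of_le_pi (by linarith) (by linarith)
  refine ⟨r * Real.sin (α - θ₂) / Real.sin (θ₁ - θ₂), r * Real.sin (θ₁ - α) / Real.sin (θ₁ - θ₂),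
    by positivity, by positivity, ?_⟩
  have hsin' : (Real.sin (θ₁ - θ₂) : ℂ) ≠ 0 := ofReal_ne_zero.mpr hsin.ne'
  calc (r : ℂ) * exp (α * I)
      = r / Real.sin (θ₁ - θ₂) * (Real.sin (θ₁ - θ₂) * exp (α * I)) := by field_simp
    _ = _ := by
      rw [← sin_sub_mul_exp_add_sin_sub_mul_exp]
      simp only [ofReal_div, ofReal_mul]
      ring

theorem exists_cos_pos_cos_pos_cos_nonpos {θ₁ θ₂ α : ℝ} (hθ : θ₂ ≤ θ₁)
    (hθπ : θ₁ < θ₂ + Real.pi) (hα : α ∈ Set.Ioo θ₁ (θ₂ + 2 * Real.pi)) :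
    ∃ ψ : ℝ, 0 < Real.cos (ψ - θ₁) ∧ 0 < Real.cos (ψ - θ₂) ∧ Real.cos (α - ψ) ≤ 0 := by
  obtain ⟨hα₁, hα₂⟩ := hα
  have hpos : ∀ x, -(Real.pi / 2) < x → x < Real.pi / 2 → 0 < Real.cos x :=
    fun x h₁ h₂ => Real.cos_pos_of_mem_Ioo ⟨h₁, h₂⟩
  rcases lt_or_ge α (θ₂ + Real.pi) with h | h
  · exact ⟨α - Real.pi / 2, hpos _ (by linarith) (by linarith),
      hpos _ (by linarith) (by linarith),
      Real.cos_nonpos_of_pi_div_two_le_of_le (by linarith) (by linarith)⟩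
  rcases le_or_gt α (θ₁ + Real.pi) with h' | h'
  · exact ⟨(θ₁ + θ₂) / 2, hpos _ (by linarith) (by linarith),
      hpos _ (by linarith) (by linarith),
      Real.cos_nonpos_of_pi_div_two_le_of_le (by linarith) (by linarith)⟩
  · exact ⟨α - 3 * Real.pi / 2, hpos _ (by linarith) (by linarith),
      hpos _ (by linarith) (by linarith),
      Real.cos_nonpos_of_pi_div_two_le_of_le (by linarith) (by linarith)⟩

theorem exp_toIcoMod_mul_I (a x : ℝ) :
    exp (toIcoMod Real.two_pi_pos a x * I) = exp (x * I) := by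
  rw [← self_sub_toIcoDiv_zsmul, exp_eq_exp_iff_exists_int]
  exact ⟨-toIcoDiv Real.two_pi_pos a x, by push_cast; ring⟩

theorem exists_angle_of_notMem_sectorCone_of_le {θ₁ θ₂ : ℝ} (hθ : θ₂ ≤ θ₁)
    (hθπ : θ₁ < θ₂ + Real.pi) {z : ℂ} (hz : z ∉ sectorCone θ₁ θ₂ \ {0}) :
    ∃ ψ : ℝ, 0 < Real.cos (ψ - θ₁) ∧ 0 < Real.cos (ψ - θ₂) ∧ (z * exp (-ψ * I)).re ≤ 0 := by
  rcases eq_or_ne z 0 with rfl | hz₀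
  · obtain ⟨ψ, h₁, h₂, -⟩ := exists_cos_pos_cos_pos_cos_nonpos hθ hθπ
      (α := θ₁ + Real.pi / 2) ⟨by linarith, by linarith [Real.pi_pos]⟩
    exact ⟨ψ, h₁, h₂, by simp⟩
  set α := toIcoMod Real.two_pi_pos θ₂ (arg z)
  have hzα : z = ‖z‖ * exp (α * I) := by
    rw [exp_toIcoMod_mul_I, norm_mul_exp_arg_mul_I]
  have hα := toIcoMod_mem_Ico Real.two_pi_pos θ₂ (arg z)
  have hαθ : θ₁ < α := by
    by_contra! h
    rw [hzα] at hz
    exact hz ⟨ofReal_mul_exp_mem_sectorCone hθπ ⟨hα.1, h⟩ (norm_nonneg z), by simpa using hz₀⟩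
  obtain ⟨ψ, h₁, h₂, h₃⟩ := exists_cos_pos_cos_pos_cos_nonpos hθ hθπ ⟨hαθ, hα.2⟩
  refine ⟨ψ, h₁, h₂, ?_⟩
  rw [hzα, mul_assoc, ← exp_add, ← add_mul, ← ofReal_neg, ← ofReal_add, re_ofReal_mul,
    exp_ofReal_mul_I_re]
  exact mul_nonpos_of_nonneg_of_nonpos (norm_nonneg z) (by simpa [sub_eq_add_neg] using h₃)

theorem exists_angle_of_notMem_sectorCone {θ₁ θ₂ : ℝ} (hθ : |θ₁ - θ₂| < Real.pi)
    {z : ℂ} (hz : z ∉ sectorCone θ₁ θ₂ \ {0}) :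
    ∃ ψ : ℝ, 0 < Real.cos (ψ - θ₁) ∧ 0 < Real.cos (ψ - θ₂) ∧ (z * exp (-ψ * I)).re ≤ 0 := by
  wlog h : θ₂ ≤ θ₁ generalizing θ₁ θ₂
  · rw [sectorCone_comm] at hz
    obtain ⟨ψ, h₁, h₂, h₃⟩ := this (by rwa [abs_sub_comm]) hz (by linarith)
    exact ⟨ψ, h₂, h₁, h₃⟩
  exact exists_angle_of_notMem_sectorCone_of_le h (by linarith [(abs_lt.mp hθ).2]) hz

theorem ofReal_mul_exp_mem_halfPlane {s ψ θ : ℝ} (hs : 0 < s) (h : 0 < Real.cos (ψ - θ)) :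
    (s : ℂ) * exp (ψ * I) ∈ halfPlane θ := by
  show 0 < ((s : ℂ) * exp (ψ * I) * exp (-θ * I)).re
  rw [mul_assoc, ← exp_add, ← add_mul, ← ofReal_neg, ← ofReal_add, re_ofReal_mul,
    exp_ofReal_mul_I_re]
  exact mul_pos hs h

theorem re_neg_inv_ofReal_mul_exp_mul (s ψ : ℝ) (z : ℂ) :
    (-((s : ℂ) * exp (ψ * I))⁻¹ * z).re = -(s⁻¹ * (z * exp (-ψ * I)).re) := by
  rw [mul_inv, ← exp_neg, ← ofReal_inv, neg_mul, mul_assoc, neg_re, re_ofReal_mul, mul_comm z,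
    neg_mul]

theorem tendsto_ofReal_mul_nhdsWithin_zero {S : Set ℂ} {v : ℂ}
    (hS : ∀ s : ℝ, 0 < s → (s : ℂ) * v ∈ S) :
    Tendsto (fun s : ℝ => (s : ℂ) * v) (𝓝[>] 0) (𝓝[S] 0) := by
  refine tendsto_nhdsWithin_iff.mpr ⟨?_, eventually_nhdsWithin_of_forall hS⟩
  have := ((continuous_ofReal.mul continuous_const).tendsto (0 : ℝ)).mono_left
    (nhdsWithin_le_nhds (s := Set.Ioi 0)) (f := fun s : ℝ => (s : ℂ) * v)
  simpa using this

theorem mul_sum_smul_of_mul_eq_ite {R A ι : Type*} [CommSemiring R] [Semiring A] [Algebra R A]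
    [Fintype ι] [DecidableEq ι] {P : ι → A} (hP : ∀ a b, P a * P b = if a = b then P a else 0)
    (c : ι → R) (a : ι) : P a * ∑ b, c b • P b = c a • P a := by
  simp [Finset.mul_sum, hP]

theorem mul_exp_of_mul_eq_smul {𝔸 : Type*} [NormedRing 𝔸] [NormedAlgebra ℂ 𝔸]
    [CompleteSpace 𝔸] {Q A : 𝔸} {ζ : ℂ} (h : Q * A = ζ • Q) :
    Q * NormedSpace.exp A = exp ζ • Q := by
  have hpow : ∀ n : ℕ, Q * A ^ n = ζ ^ n • Q := by
    intro n
    induction n with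
    | zero => simp
    | succ n ih => rw [pow_succ, ← mul_assoc, ih, smul_mul_assoc, h, smul_smul, pow_succ]
  have hQ := (NormedSpace.exp_series_hasSum_exp' (𝕂 := ℂ) A).mul_left Q
  have hζ := (NormedSpace.exp_series_hasSum_exp' (𝕂 := ℂ) ζ).smul_const Q
  rw [← exp_eq_exp_ℂ] at hζ
  refine hQ.unique ?_
  simpa only [mul_smul_comm, hpow, smul_eq_mul, smul_smul] using hζ

theorem stmt1_general {U : Type*} [NormedAddCommGroup U] [NormedSpace ℂ U] [FiniteDimensional ℂ U]
    {m : ℕ} (z : Fin m → ℂ)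
    (P : Fin m → U →L[ℂ] U)
    (hmul : ∀ a b, P a * P b = if a = b then P a else 0)
    (Z : U →L[ℂ] U) (hZ : Z = ∑ a, z a • P a)
    (θ₁ θ₂ : ℝ) (hθ : |θ₁ - θ₂| < Real.pi)
    (u : U)
    (hu : Tendsto (fun t : ℂ => NormedSpace.exp ((-t⁻¹) • Z) u)
      (𝓝[{t : ℂ | 0 < (t * Complex.exp (-(θ₁ : ℂ) * Complex.I)).re} ∩
          {t : ℂ | 0 < (t * Complex.exp (-(θ₂ : ℂ) * Complex.I)).re}] 0) (𝓝 0)) :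
    ∀ a, z a ∉ ({w : ℂ | ∃ s₁ s₂ : ℝ, 0 ≤ s₁ ∧ 0 ≤ s₂ ∧
        w = (s₁ : ℂ) * Complex.exp ((θ₁ : ℂ) * Complex.I)
          + (s₂ : ℂ) * Complex.exp ((θ₂ : ℂ) * Complex.I)} \ {0}) →
      P a u = 0 := by
  intro a ha
  obtain ⟨ψ, h₁, h₂, hψ⟩ := exists_angle_of_notMem_sectorCone hθ ha
  have hray : Tendsto (fun s : ℝ => (s : ℂ) * exp (ψ * I)) (𝓝[>] 0)
      (𝓝[halfPlane θ₁ ∩ halfPlane θ₂] 0) :=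
    tendsto_ofReal_mul_nhdsWithin_zero fun s hs =>
      ⟨ofReal_mul_exp_mem_halfPlane hs h₁, ofReal_mul_exp_mem_halfPlane hs h₂⟩
  have hlim := (((P a).continuous.tendsto 0).comp (hu.comp hray)).norm
  rw [map_zero, norm_zero] at hlim
  have hPZ : P a * Z = z a • P a := hZ ▸ mul_sum_smul_of_mul_eq_ite hmul z a
  refine norm_le_zero_iff.mp (ge_of_tendsto hlim (eventually_nhdsWithin_of_forall fun s hs => ?_))
  set c : ℂ := -((s : ℂ) * exp (ψ * I))⁻¹
  have hexp : P a (NormedSpace.exp (c • Z) u) = exp (c * z a) • P a u :=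
    DFunLike.congr_fun
      (mul_exp_of_mul_eq_smul (A := c • Z) (by rw [mul_smul_comm, hPZ, smul_smul])) u
  show ‖P a u‖ ≤ ‖P a (NormedSpace.exp (c • Z) u)‖
  rw [hexp, norm_smul, norm_exp, re_neg_inv_ofReal_mul_exp_mul]
  refine le_mul_of_one_le_left (norm_nonneg _) (Real.one_le_exp ?_)
  exact neg_nonneg.mpr (mul_nonpos_of_nonneg_of_nonpos (inv_nonneg.mpr hs.le) hψ)

/-- If `Z = Σ z_a • P_a` is a semisimple endomorphism of a finite-dimensional
complex vector space and `exp (-Z/t) u → 0` as `t → 0` in `H_{θ₁} ∩ H_{θ₂}` (with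
`|θ₁ - θ₂| < π`), then `P_a u = 0` whenever `z_a` does not lie in the closed convex sector
bounded by the rays `ℝ_{>0} e^{iθ₁}` and `ℝ_{>0} e^{iθ₂}`. -/
theorem stmt1 {U : Type*} [NormedAddCommGroup U] [NormedSpace ℂ U] [FiniteDimensional ℂ U]
    {m : ℕ} (z : Fin m → ℂ) (hz : Function.Injective z)
    (P : Fin m → U →L[ℂ] U) (hPne : ∀ a, P a ≠ 0)
    (hmul : ∀ a b, P a * P b = if a = b then P a else 0)
    (hsum : ∑ a, P a = 1)
    (Z : U →L[ℂ] U) (hZ : Z = ∑ a, z a • P a)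
    (θ₁ θ₂ : ℝ) (hθ : |θ₁ - θ₂| < Real.pi)
    (u : U)
    (hu : Tendsto (fun t : ℂ => NormedSpace.exp ((-t⁻¹) • Z) u)
      (𝓝[{t : ℂ | 0 < (t * Complex.exp (-(θ₁ : ℂ) * Complex.I)).re} ∩
          {t : ℂ | 0 < (t * Complex.exp (-(θ₂ : ℂ) * Complex.I)).re}] 0) (𝓝 0)) :
    ∀ a, z a ∉ ({w : ℂ | ∃ s₁ s₂ : ℝ, 0 ≤ s₁ ∧ 0 ≤ s₂ ∧
        w = (s₁ : ℂ) * Complex.exp ((θ₁ : ℂ) * Complex.I)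
          + (s₂ : ℂ) * Complex.exp ((θ₂ : ℂ) * Complex.I)} \ {0}) →
      P a u = 0 :=
  stmt1_general z P hmul Z hZ θ₁ θ₂ hθ u hu
end

section
/- (Watson's Lemma.) Let φ : [0,∞) → ℂ be a measurable function such that |φ(z)| ≤ C·e^{cz} for all z ≥ 0 and some constants C, c > 0, and suppose φ is analytic at 0: there exist R > 0 and complex numbers a₀, a₁, a₂, … such that φ(z) = Σ_{n≥0} a_n·z^n/n! for all z ∈ [0, R), the series converging there. Then for every integer N ≥ 0 and every δ ∈ (0, π/2) there exist constants K > 0 and ε > 0 such that for all t ∈ ℂ with 0 < |t| < ε and |arg(t)| ≤ π/2 − δ, the integral Y(t) = ∫₀^∞ φ(z)·e^{−z/t} dz converges absolutely and |Y(t) − Σ_{n=0}^{N−1} a_n·t^{n+1}| ≤ K·|t|^{N+1}. In particular, Y(t) has the asymptotic expansion Σ_{n≥0} a_n·t^{n+1} as t → 0 in closed subsectors of the half-plane Re(t) > 0. -/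
/-!
Subtracting the Taylor polynomial `P_N z = ∑_{n<N} a_n z^n / n!` from `φ` leaves a remainder
bounded by `E z^N e^{cz}` on all of `[0, ∞)`: near `0` by the geometric tail of the power series,
far from `0` by the growth bound. Since `∫₀^∞ z^n e^{-bz} dz = n! / b^{n+1}` for `Re b > 0`, with
`b = 1/t` the Taylor polynomial contributes exactly `∑_{n<N} a_n t^{n+1}`, and the remainder at most
`E N! / (Re b - c)^{N+1}`. In the sector `|arg t| ≤ π/2 - δ` we have `Re (1/t) ≥ sin δ / |t|`,
so this is `O(|t|^{N+1})` once `|t| < sin δ / (2c)`.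
-/

open Complex Filter Topology MeasureTheory Set

lemma norm_cexp_neg_mul_ofReal (b : ℂ) (z : ℝ) :
    ‖cexp (-b * z)‖ = Real.exp (-(b.re * z)) := by
  simp [norm_exp]

lemma integrableOn_pow_mul_exp_neg_mul (N : ℕ) {s : ℝ} (hs : 0 < s) :
    IntegrableOn (fun z : ℝ => z ^ N * Real.exp (-(s * z))) (Ioi 0) := by
  have hN : (-1 : ℝ) < N := by linarith [N.cast_nonneg (α := ℝ)]
  refine (integrableOn_rpow_mul_exp_neg_mul_rpow hN one_pos hs).congr_fun (fun z _ => ?_)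
    measurableSet_Ioi
  simp [Real.rpow_natCast]

lemma integral_pow_mul_exp_neg_mul (N : ℕ) {s : ℝ} (hs : 0 < s) :
    ∫ z in Ioi 0, z ^ N * Real.exp (-(s * z)) = N.factorial / s ^ (N + 1) := by
  have h := Real.integral_rpow_mul_exp_neg_mul_Ioi (a := N + 1) (by positivity) hs
  rw [add_sub_cancel_right, Real.Gamma_nat_eq_factorial, ← Nat.cast_succ] at h
  simp only [Real.rpow_natCast] at h
  rw [h, one_div_pow, one_div_mul_eq_div]

section ExponentialGrowth

variable {g : ℝ → ℂ} {E c : ℝ} {N : ℕ} {b : ℂ}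

lemma norm_mul_cexp_neg_mul_le (hbound : ∀ z, 0 ≤ z → ‖g z‖ ≤ E * z ^ N * Real.exp (c * z))
    {z : ℝ} (hz : 0 ≤ z) :
    ‖g z * cexp (-b * z)‖ ≤ E * (z ^ N * Real.exp (-((b.re - c) * z))) := by
  rw [norm_mul, norm_cexp_neg_mul_ofReal]
  calc ‖g z‖ * Real.exp (-(b.re * z))
      ≤ E * z ^ N * Real.exp (c * z) * Real.exp (-(b.re * z)) := by gcongr; exact hbound z hz
    _ = E * (z ^ N * Real.exp (-((b.re - c) * z))) := by
      rw [mul_assoc, mul_assoc, ← Real.exp_add]; ring_nf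

lemma integrableOn_mul_cexp_neg_mul (hg : Measurable g)
    (hbound : ∀ z, 0 ≤ z → ‖g z‖ ≤ E * z ^ N * Real.exp (c * z)) (hb : c < b.re) :
    IntegrableOn (fun z : ℝ => g z * cexp (-b * z)) (Ioi 0) := by
  refine ((integrableOn_pow_mul_exp_neg_mul N (sub_pos.2 hb)).const_mul E).mono'
    (by fun_prop) ?_
  filter_upwards [ae_restrict_mem measurableSet_Ioi] with z hz
  exact norm_mul_cexp_neg_mul_le hbound (le_of_lt hz)

lemma norm_integral_mul_cexp_neg_mul_le
    (hbound : ∀ z, 0 ≤ z → ‖g z‖ ≤ E * z ^ N * Real.exp (c * z)) (hb : c < b.re) :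
    ‖∫ z in Ioi 0, g z * cexp (-b * z)‖ ≤ E * N.factorial / (b.re - c) ^ (N + 1) := by
  have hmaj := (integrableOn_pow_mul_exp_neg_mul N (sub_pos.2 hb)).const_mul E
  refine (norm_integral_le_of_norm_le hmaj ?_).trans_eq ?_
  · filter_upwards [ae_restrict_mem measurableSet_Ioi] with z hz
    exact norm_mul_cexp_neg_mul_le hbound (le_of_lt hz)
  · rw [integral_const_mul, integral_pow_mul_exp_neg_mul N (sub_pos.2 hb), mul_div_assoc]

end ExponentialGrowth

lemma integrableOn_pow_mul_cexp_neg_mul (n : ℕ) {b : ℂ} (hb : 0 < b.re) :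
    IntegrableOn (fun z : ℝ => (z : ℂ) ^ n * cexp (-b * z)) (Ioi 0) :=
  integrableOn_mul_cexp_neg_mul (E := 1) (c := 0) (by fun_prop)
    (fun z hz => by rw [norm_pow, norm_real, Real.norm_of_nonneg hz, zero_mul, Real.exp_zero,
      one_mul, mul_one]) hb

lemma tendsto_pow_mul_cexp_neg_mul_atTop (n : ℕ) {b : ℂ} (hb : 0 < b.re) :
    Tendsto (fun z : ℝ => (z : ℂ) ^ n * cexp (-b * z)) atTop (𝓝 0) := by
  refine squeeze_zero_norm' ?_ (tendsto_rpow_mul_exp_neg_mul_atTop_nhds_zero n b.re hb)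
  filter_upwards [eventually_ge_atTop 0] with z hz
  rw [norm_mul, norm_pow, norm_real, Real.norm_of_nonneg hz, norm_cexp_neg_mul_ofReal,
    Real.rpow_natCast, neg_mul]

lemma integral_pow_succ_mul_cexp_neg_mul (n : ℕ) {b : ℂ} (hb : 0 < b.re) :
    b * ∫ z : ℝ in Ioi 0, (z : ℂ) ^ (n + 1) * cexp (-b * z) =
      (n + 1) * ∫ z : ℝ in Ioi 0, (z : ℂ) ^ n * cexp (-b * z) := by
  have hderiv : ∀ x ∈ Ici (0 : ℝ), HasDerivAt (fun z : ℝ => (z : ℂ) ^ (n + 1) * cexp (-b * z))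
      ((n + 1) * ((x : ℂ) ^ n * cexp (-b * x)) - b * ((x : ℂ) ^ (n + 1) * cexp (-b * x))) x := by
    intro x _
    have hpow : HasDerivAt (fun z : ℝ => (z : ℂ) ^ (n + 1)) ((n + 1) * (x : ℂ) ^ n) x := by
      simpa using (hasDerivAt_pow (n + 1) (x : ℂ)).comp_ofReal
    have hexp : HasDerivAt (fun z : ℝ => cexp (-b * z)) (cexp (-b * x) * -b) x := by
      simpa using (((hasDerivAt_id (x : ℂ)).const_mul (-b)).cexp).comp_ofReal
    exact (hpow.mul hexp).congr_deriv (by ring)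
  have hint_n := (integrableOn_pow_mul_cexp_neg_mul n hb).const_mul ((n : ℂ) + 1)
  have hint_succ := (integrableOn_pow_mul_cexp_neg_mul (n + 1) hb).const_mul b
  have key := integral_Ioi_of_hasDerivAt_of_tendsto' hderiv (hint_n.sub hint_succ)
    (tendsto_pow_mul_cexp_neg_mul_atTop (n + 1) hb)
  rw [integral_sub hint_n hint_succ, integral_const_mul, integral_const_mul] at key
  simp only [ofReal_zero, zero_pow n.succ_ne_zero, zero_mul, sub_zero] at key
  linear_combination -key

lemma integral_pow_mul_cexp_neg_mul (n : ℕ) {b : ℂ} (hb : 0 < b.re) :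
    ∫ z : ℝ in Ioi 0, (z : ℂ) ^ n * cexp (-b * z) = n.factorial / b ^ (n + 1) := by
  have hb0 : b ≠ 0 := by rintro rfl; simp at hb
  induction n with
  | zero =>
    have := integral_exp_mul_complex_Ioi (a := -b) (by simpa using hb) 0
    simpa [neg_div_neg_eq] using this
  | succ n ih =>
    have h := integral_pow_succ_mul_cexp_neg_mul n hb
    rw [ih] at h
    have hcancel : (n.factorial : ℂ) / b ^ (n + 1) * b ^ (n + 1) = n.factorial :=
      div_mul_cancel₀ _ (pow_ne_zero _ hb0)
    rw [eq_div_iff (pow_ne_zero _ hb0), Nat.factorial_succ]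
    push_cast
    linear_combination b ^ (n + 1) * h + (n + 1) * hcancel

lemma norm_tsum_sub_sum_range_le {𝕜 : Type*} [NormedField 𝕜] [CompleteSpace 𝕜] {p : ℕ → 𝕜}
    {q A : ℝ} (hq : 0 < q) (hA : ∀ n, ‖p n‖ * q ^ n ≤ A) (N : ℕ) {z : 𝕜} (hz : ‖z‖ ≤ q / 2) :
    ‖∑' n, p n * z ^ n - ∑ n ∈ Finset.range N, p n * z ^ n‖ ≤ 2 * A / q ^ N * ‖z‖ ^ N := by
  set u := ‖z‖ / q
  have hu0 : 0 ≤ u := by positivity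
  have hu : u ≤ 1 / 2 := by rw [div_le_iff₀ hq]; linarith
  have hA0 : 0 ≤ A := (by positivity : 0 ≤ ‖p 0‖ * q ^ 0).trans (hA 0)
  have hterm : ∀ n, ‖p n * z ^ n‖ ≤ A * u ^ n := fun n => by
    calc ‖p n * z ^ n‖ = ‖p n‖ * q ^ n * u ^ n := by
          rw [norm_mul, norm_pow, mul_assoc, ← mul_pow, mul_div_cancel₀ _ hq.ne']
      _ ≤ A * u ^ n := by gcongr; exact hA n
  have hsummable : Summable fun n => p n * z ^ n :=
    .of_norm_bounded ((summable_geometric_of_lt_one hu0 (by linarith)).mul_left A) hterm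
  have htail : HasSum (fun i => A * u ^ N * u ^ i) (A * u ^ N * (1 - u)⁻¹) :=
    (hasSum_geometric_of_lt_one hu0 (by linarith)).mul_left _
  rw [← hsummable.sum_add_tsum_nat_add N, add_sub_cancel_left]
  calc ‖∑' i, p (i + N) * z ^ (i + N)‖ ≤ A * u ^ N * (1 - u)⁻¹ :=
        tsum_of_norm_bounded htail fun i => (hterm _).trans_eq (by ring)
    _ ≤ A * u ^ N * 2 := by
        gcongr
        rw [inv_le_comm₀ (by linarith) two_pos]
        linarith
    _ = 2 * A / q ^ N * ‖z‖ ^ N := by rw [div_pow]; field_simp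

noncomputable def taylorSum (a : ℕ → ℂ) (N : ℕ) (z : ℝ) : ℂ :=
  ∑ n ∈ Finset.range N, a n * (z : ℂ) ^ n / n.factorial

lemma integrableOn_taylorSum_mul_cexp_neg_mul (a : ℕ → ℂ) (N : ℕ) {b : ℂ} (hb : 0 < b.re) :
    IntegrableOn (fun z => taylorSum a N z * cexp (-b * z)) (Ioi 0) := by
  simp only [taylorSum, Finset.sum_mul]
  refine integrable_finsetSum _ fun n _ => ?_
  simpa only [mul_div_right_comm, mul_assoc] using
    (integrableOn_pow_mul_cexp_neg_mul n hb).const_mul (a n / n.factorial)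

lemma integral_taylorSum_mul_cexp_neg_mul (a : ℕ → ℂ) (N : ℕ) {b : ℂ} (hb : 0 < b.re) :
    ∫ z in Ioi 0, taylorSum a N z * cexp (-b * z) = ∑ n ∈ Finset.range N, a n * b⁻¹ ^ (n + 1) := by
  have hterm : ∀ n, IntegrableOn (fun z : ℝ => a n / n.factorial * ((z : ℂ) ^ n * cexp (-b * z)))
      (Ioi 0) := fun n => (integrableOn_pow_mul_cexp_neg_mul n hb).const_mul _
  calc ∫ z in Ioi 0, taylorSum a N z * cexp (-b * z)
      = ∫ z : ℝ in Ioi 0,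
          ∑ n ∈ Finset.range N, a n / n.factorial * ((z : ℂ) ^ n * cexp (-b * z)) := by
        simp only [taylorSum, Finset.sum_mul, mul_div_right_comm, mul_assoc]
    _ = ∑ n ∈ Finset.range N, a n * b⁻¹ ^ (n + 1) := by
        rw [integral_finsetSum _ fun n _ => hterm n]
        refine Finset.sum_congr rfl fun n _ => ?_
        rw [integral_const_mul, integral_pow_mul_cexp_neg_mul n hb, inv_pow]
        have : (n.factorial : ℂ) ≠ 0 := Nat.cast_ne_zero.2 n.factorial_ne_zero
        field_simp

lemma norm_taylorSum_le (a : ℕ → ℂ) (N : ℕ) {c z : ℝ} (hc : 0 < c) (hz : 0 ≤ z) :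
    ‖taylorSum a N z‖ ≤ (∑ n ∈ Finset.range N, ‖a n‖ / c ^ n) * Real.exp (c * z) := by
  rw [Finset.sum_mul]
  refine (norm_sum_le _ _).trans (Finset.sum_le_sum fun n _ => ?_)
  calc ‖a n * (z : ℂ) ^ n / n.factorial‖ = ‖a n‖ / c ^ n * ((c * z) ^ n / n.factorial) := by
        rw [norm_div, norm_mul, norm_pow, norm_real, Real.norm_of_nonneg hz, norm_natCast, mul_pow]
        field_simp
    _ ≤ ‖a n‖ / c ^ n * Real.exp (c * z) := by
        gcongr; exact Real.pow_div_factorial_le_exp _ (by positivity) n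

lemma exists_norm_sub_taylorSum_le_pow {φ : ℝ → ℂ} {R : ℝ} (hR : 0 < R) {a : ℕ → ℂ}
    (hanal : ∀ z : ℝ, 0 ≤ z → z < R →
      HasSum (fun n : ℕ => a n * (z : ℂ) ^ n / (n.factorial : ℂ)) (φ z)) (N : ℕ) :
    ∃ M, ∀ z, 0 ≤ z → z ≤ R / 4 → ‖φ z - taylorSum a N z‖ ≤ M * z ^ N := by
  have hcoeff : ∀ (n : ℕ) (w : ℂ), a n * w ^ n / n.factorial = a n / n.factorial * w ^ n :=
    fun n w => by ring
  obtain ⟨A, hA⟩ := ((hanal (R / 2) (by positivity) (by linarith)).summable.tendsto_atTop_zero.norm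
    |>.bddAbove_range)
  have hA' : ∀ n, ‖a n / n.factorial‖ * (R / 2) ^ n ≤ A := fun n => by
    have := hA ⟨n, rfl⟩
    dsimp only at this
    rwa [hcoeff, norm_mul, norm_pow, norm_real, Real.norm_of_nonneg (by positivity)] at this
  refine ⟨2 * A / (R / 2) ^ N, fun z hz0 hz => ?_⟩
  have hz' : ‖(z : ℂ)‖ ≤ R / 2 / 2 := by rw [norm_real, Real.norm_of_nonneg hz0]; linarith
  have := norm_tsum_sub_sum_range_le (half_pos hR) hA' N hz'
  simpa [← (hanal z hz0 (by linarith)).tsum_eq, taylorSum, hcoeff, Real.norm_of_nonneg hz0]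
    using this

lemma exists_norm_sub_taylorSum_le {φ : ℝ → ℂ} {C c : ℝ} (hC : 0 ≤ C) (hc : 0 < c)
    (hgrow : ∀ z : ℝ, 0 ≤ z → ‖φ z‖ ≤ C * Real.exp (c * z)) {R : ℝ} (hR : 0 < R) {a : ℕ → ℂ}
    (hanal : ∀ z : ℝ, 0 ≤ z → z < R →
      HasSum (fun n : ℕ => a n * (z : ℂ) ^ n / (n.factorial : ℂ)) (φ z)) (N : ℕ) :
    ∃ E, 0 ≤ E ∧ ∀ z, 0 ≤ z → ‖φ z - taylorSum a N z‖ ≤ E * z ^ N * Real.exp (c * z) := by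
  obtain ⟨M, hM⟩ := exists_norm_sub_taylorSum_le_pow hR hanal N
  set D := C + ∑ n ∈ Finset.range N, ‖a n‖ / c ^ n
  have hD : 0 ≤ D := add_nonneg hC (Finset.sum_nonneg fun n _ => by positivity)
  have hρ : 0 < R / 4 := by positivity
  refine ⟨max M (D / (R / 4) ^ N), le_max_of_le_right (by positivity), fun z hz => ?_⟩
  rcases le_or_gt z (R / 4) with hzR | hzR
  · calc ‖φ z - taylorSum a N z‖ ≤ M * z ^ N := hM z hz hzR
      _ ≤ max M (D / (R / 4) ^ N) * z ^ N * 1 := by rw [mul_one]; gcongr; exact le_max_left _ _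
      _ ≤ _ := by gcongr; exact Real.one_le_exp (by positivity)
  · calc ‖φ z - taylorSum a N z‖ ≤ D * Real.exp (c * z) := by
          refine (norm_sub_le _ _).trans ?_
          rw [add_mul]
          exact add_le_add (hgrow z hz) (norm_taylorSum_le a N hc hz)
      _ = D / (R / 4) ^ N * (R / 4) ^ N * Real.exp (c * z) := by field_simp
      _ ≤ max M (D / (R / 4) ^ N) * z ^ N * Real.exp (c * z) := by
          gcongr; exact le_max_right _ _

lemma cos_div_norm_le_re_inv {t : ℂ} (ht : t ≠ 0) {θ : ℝ} (harg : |arg t| ≤ θ)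
    (hθ : θ ≤ Real.pi) : Real.cos θ / ‖t‖ ≤ t⁻¹.re := by
  have hcos : Real.cos θ ≤ Real.cos (arg t) := by
    rw [← Real.cos_abs (arg t)]
    exact Real.cos_le_cos_of_nonneg_of_le_pi (abs_nonneg _) hθ harg
  rw [inv_re, normSq_eq_norm_sq, sq, ← div_div, ← cos_arg ht]
  gcongr

lemma sin_div_le_re_inv_sub {t : ℂ} (ht : 0 < ‖t‖) {δ c : ℝ} (hδ : 0 ≤ δ)
    (harg : |arg t| ≤ Real.pi / 2 - δ) (hc : 0 < c) (htε : ‖t‖ < Real.sin δ / (2 * c)) :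
    Real.sin δ / (2 * ‖t‖) ≤ t⁻¹.re - c := by
  have hsector := cos_div_norm_le_re_inv (norm_pos_iff.1 ht) harg (by linarith [Real.pi_pos])
  rw [Real.cos_pi_div_two_sub] at hsector
  have hct : c * ‖t‖ ≤ Real.sin δ / 2 := by
    rw [lt_div_iff₀ (by positivity)] at htε; linarith
  have : Real.sin δ / (2 * ‖t‖) + c ≤ Real.sin δ / ‖t‖ := by
    rw [div_add' _ _ _ (by positivity), div_le_div_iff₀ (by positivity) ht]; nlinarith
  linarith

/-- Watson's Lemma: if `φ : [0,∞) → ℂ` is measurable, of at most exponential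
growth, and analytic at `0` with Taylor coefficients `a_n` (i.e. `φ z = Σ a_n z^n / n!` on
`[0, R)`), then for every `N` and every `δ ∈ (0, π/2)` there are `K, ε > 0` such that for
all `t` with `0 < |t| < ε` and `|arg t| ≤ π/2 - δ`, the Laplace integral
`Y(t) = ∫₀^∞ φ(z) e^{-z/t} dz` converges absolutely and
`|Y(t) - Σ_{n<N} a_n t^{n+1}| ≤ K |t|^{N+1}`. -/
theorem stmt4 (φ : ℝ → ℂ) (hmeas : Measurable φ)
    (C c : ℝ) (hC : 0 < C) (hc : 0 < c)
    (hgrow : ∀ z : ℝ, 0 ≤ z → ‖φ z‖ ≤ C * Real.exp (c * z))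
    (R : ℝ) (hR : 0 < R) (a : ℕ → ℂ)
    (hanal : ∀ z : ℝ, 0 ≤ z → z < R →
      HasSum (fun n : ℕ => a n * (z : ℂ) ^ n / (n.factorial : ℂ)) (φ z)) :
    ∀ N : ℕ, ∀ δ : ℝ, 0 < δ → δ < Real.pi / 2 →
      ∃ K > (0 : ℝ), ∃ ε > (0 : ℝ), ∀ t : ℂ, 0 < ‖t‖ → ‖t‖ < ε →
        |Complex.arg t| ≤ Real.pi / 2 - δ →
        IntegrableOn (fun z : ℝ => φ z * Complex.exp (-(z : ℂ) / t)) (Set.Ici (0 : ℝ)) ∧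
        ‖(∫ z in Set.Ici (0 : ℝ), φ z * Complex.exp (-(z : ℂ) / t)) -
            ∑ n ∈ Finset.range N, a n * t ^ (n + 1)‖ ≤ K * ‖t‖ ^ (N + 1) := by
  intro N δ hδ hδπ
  obtain ⟨E, hE0, hE⟩ := exists_norm_sub_taylorSum_le hC.le hc hgrow hR hanal N
  have hsin : 0 < Real.sin δ := Real.sin_pos_of_pos_of_lt_pi hδ (by linarith [Real.pi_pos])
  refine ⟨E * N.factorial * (2 / Real.sin δ) ^ (N + 1) + 1, by positivity,
    Real.sin δ / (2 * c), by positivity, fun t ht0 htε harg => ?_⟩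
  have hre := sin_div_le_re_inv_sub ht0 hδ.le harg hc htε
  have hb : c < t⁻¹.re := by linarith [(by positivity : 0 < Real.sin δ / (2 * ‖t‖))]
  have hexp : ∀ z : ℝ, cexp (-(z : ℂ) / t) = cexp (-t⁻¹ * z) := fun z => by ring_nf
  simp only [hexp]
  have hφ := integrableOn_mul_cexp_neg_mul (N := 0) hmeas (fun z hz => by simpa using hgrow z hz) hb
  have hpoly := integral_taylorSum_mul_cexp_neg_mul a N (hc.trans hb)
  rw [inv_inv] at hpoly
  refine ⟨(integrableOn_Ici_iff_integrableOn_Ioi).2 hφ, ?_⟩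
  rw [integral_Ici_eq_integral_Ioi, ← hpoly, ← integral_sub hφ
    (integrableOn_taylorSum_mul_cexp_neg_mul a N (hc.trans hb))]
  simp only [← sub_mul]
  calc _ ≤ E * N.factorial / (t⁻¹.re - c) ^ (N + 1) := norm_integral_mul_cexp_neg_mul_le hE hb
    _ ≤ E * N.factorial / (Real.sin δ / (2 * ‖t‖)) ^ (N + 1) := by gcongr
    _ = E * N.factorial * (2 / Real.sin δ) ^ (N + 1) * ‖t‖ ^ (N + 1) := by
      rw [div_pow, div_pow, mul_pow]; field_simp
    _ ≤ _ := by gcongr; linarith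
end

section
/- (Convergence of regularised iterated integrals.) Let P ⊂ ℂ be a finite set and let γ : [0,1] → ℂ be a continuously differentiable path with γ(t) ∉ P for all t ∈ (0,1), γ′(0) ≠ 0 and γ′(1) ≠ 0; set p = γ(0) and q = γ(1) (which may belong to P). Let n ≥ 1 and p₁,…,p_n ∈ P with p₁ ≠ q and p_n ≠ p. Then there exists L ∈ ℂ such that the truncated iterated integrals ∫_{{u ≥ t₁ ≥ t₂ ≥ ⋯ ≥ t_n ≥ s}} ∏_{i=1}^n γ′(t_i)/(γ(t_i) − p_i) dt₁⋯dt_n converge to L as s → 0⁺ and u → 1⁻. -/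
/-!
Write `fᵢ(x) = γ'(x) / (γ(x) - pᵢ)`. Since `γ' ≠ 0` at the endpoints, `|γ(x) - z|` is at least a
multiple of `x` near `0` and of `1 - x` near `1` for every `z ∈ P`, and is bounded below where
`z` differs from the endpoint. Hence `|fᵢ(x)| ≲ 1/(x(1-x))`, while `p₀ ≠ γ(1)` gives
`|f₀(x)| ≲ 1/x` and `pₙ ≠ γ(0)` gives `|fₙ(x)| ≲ 1/(1-x)`.

With `φ(x) = √(x/(1-x))` one has `φ(x)/(x(1-x)) = 2φ'(x)` and `1/(1-x) ≤ φ(x)/(x(1-x))`, so by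
induction on `n - k` the integral of `∏_{i ≥ k} |fᵢ(tᵢ)|` over `{b ≥ tₖ ≥ ⋯ ≥ tₙ > 0}` is at
most a multiple of `φ(b)` for `k ≥ 1`. Integrating out `t₀` against `|f₀(t₀)| ≲ 1/t₀` then gives
something finite, since `∫₀¹ φ(x)/x dx = π`. So the integrand is integrable on the open simplex
`{1 > t₀ ≥ ⋯ ≥ tₙ > 0}`, which the truncated simplices exhaust, and dominated convergence gives
the limit.
-/

open Complex Filter Topology MeasureTheory Set
open scoped ENNReal NNReal

section LowerBound

variable {E : Type*} [NormedAddCommGroup E] [NormedSpace ℝ E]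

theorem exists_pos_mul_sub_le_norm_sub {f : ℝ → E} {f' : E} {a b : ℝ}
    (hf : ContinuousOn f (Icc a b)) (hfa : HasDerivAt f f' a) (hf' : f' ≠ 0)
    (hne : ∀ x ∈ Ioc a b, f x ≠ f a) :
    ∃ c > 0, ∀ x ∈ Icc a b, c * (x - a) ≤ ‖f x - f a‖ := by
  have hcont : ContinuousOn (dslope f a) (Icc a b) := by
    intro x hx
    rcases eq_or_ne x a with rfl | hxa
    · exact (continuousAt_dslope_same.2 hfa.differentiableAt).continuousWithinAt
    · exact (continuousWithinAt_dslope_of_ne hxa).2 (hf x hx)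
  have hne0 : ∀ x ∈ Icc a b, dslope f a x ≠ 0 := by
    intro x hx
    rcases eq_or_ne x a with rfl | hxa
    · rwa [dslope_same, hfa.deriv]
    · rw [dslope_of_ne _ hxa, slope_def_module]
      exact smul_ne_zero (inv_ne_zero (sub_ne_zero.2 hxa))
        (sub_ne_zero.2 (hne x ⟨hx.1.lt_of_ne' hxa, hx.2⟩))
  obtain ⟨c, hc, hle⟩ := isCompact_Icc.exists_forall_le' hcont.norm fun x hx =>
    norm_pos_iff.2 (hne0 x hx)
  refine ⟨c, hc, fun x hx => ?_⟩
  rw [← sub_smul_dslope f a x, norm_smul, Real.norm_of_nonneg (sub_nonneg.2 hx.1)]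
  nlinarith [hle x hx, sub_nonneg.2 hx.1]

theorem exists_pos_mul_le_norm_sub_of_hasDerivAt_zero {f : ℝ → E} {v z : E}
    (hf : ContinuousOn f (Icc 0 1)) (hf₀ : HasDerivAt f v 0) (hv : v ≠ 0)
    (hz : ∀ x ∈ Ioo (0 : ℝ) 1, f x ≠ z) :
    ∃ c > 0, ∀ x ∈ Ioc (0 : ℝ) (1 / 2), c * x ≤ ‖f x - z‖ ∧ (f 0 ≠ z → c ≤ ‖f x - z‖) := by
  have hsub : Icc (0 : ℝ) (1 / 2) ⊆ Icc 0 1 := Icc_subset_Icc_right (by norm_num)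
  by_cases h₀ : f 0 = z
  · subst h₀
    obtain ⟨c, hc, hle⟩ := exists_pos_mul_sub_le_norm_sub (hf.mono hsub) hf₀ hv
      fun x hx => hz x ⟨hx.1, by linarith [hx.2]⟩
    exact ⟨c, hc, fun x hx => ⟨by simpa using hle x (Ioc_subset_Icc_self hx), absurd rfl⟩⟩
  · have hne : ∀ x ∈ Icc (0 : ℝ) (1 / 2), f x - z ≠ 0 := by
      intro x hx
      rcases hx.1.eq_or_lt with rfl | hx₀
      · exact sub_ne_zero.2 h₀
      · exact sub_ne_zero.2 (hz x ⟨hx₀, by linarith [hx.2]⟩)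
    obtain ⟨c, hc, hle⟩ := isCompact_Icc.exists_forall_le' (f := fun x => ‖f x - z‖)
      ((hf.mono hsub).sub continuousOn_const).norm fun x hx => norm_pos_iff.2 (hne x hx)
    refine ⟨c, hc, fun x hx => ⟨?_, fun _ => hle x (Ioc_subset_Icc_self hx)⟩⟩
    nlinarith [hle x (Ioc_subset_Icc_self hx), hx.2]

theorem eventually_mul_le_norm_sub {f : ℝ → E} {v₀ v₁ z : E} (hf : ContinuousOn f (Icc 0 1))
    (hf₀ : HasDerivAt f v₀ 0) (hf₁ : HasDerivAt f v₁ 1) (hv₀ : v₀ ≠ 0) (hv₁ : v₁ ≠ 0)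
    (hz : ∀ x ∈ Ioo (0 : ℝ) 1, f x ≠ z) :
    ∀ᶠ c in 𝓝[>] (0 : ℝ), ∀ x ∈ Ioo (0 : ℝ) 1, c * (x * (1 - x)) ≤ ‖f x - z‖ ∧
      (f 1 ≠ z → c * x ≤ ‖f x - z‖) ∧ (f 0 ≠ z → c * (1 - x) ≤ ‖f x - z‖) := by
  obtain ⟨c₀, hc₀, hleft⟩ := exists_pos_mul_le_norm_sub_of_hasDerivAt_zero hf hf₀ hv₀ hz
  have hrev : HasDerivAt (fun x => f (1 - x)) (-v₁) 0 :=
    HasDerivAt.comp_const_sub 1 0 (by rwa [sub_zero])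
  have hrev_cont : ContinuousOn (fun x => f (1 - x)) (Icc 0 1) :=
    hf.comp (continuous_const.sub continuous_id).continuousOn fun x hx =>
      ⟨by simp [hx.2], by simp [hx.1]⟩
  obtain ⟨c₁, hc₁, hright⟩ := exists_pos_mul_le_norm_sub_of_hasDerivAt_zero hrev_cont hrev
    (neg_ne_zero.2 hv₁) fun x hx => hz (1 - x) ⟨by linarith [hx.2], by linarith [hx.1]⟩
  filter_upwards [Ioc_mem_nhdsGT (lt_min hc₀ hc₁)] with c ⟨hc, hcle⟩ x ⟨hx₀, hx₁⟩
  have h₀ : c ≤ c₀ := hcle.trans (min_le_left _ _)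
  have h₁ : c ≤ c₁ := hcle.trans (min_le_right _ _)
  have hx₁' : 0 < 1 - x := by linarith
  have hcx : 0 ≤ c * x * x := by positivity
  have hcx' : 0 ≤ c * (1 - x) * (1 - x) := by positivity
  rcases le_or_gt x (1 / 2) with hx | hx
  · obtain ⟨hlin, hconst⟩ := hleft x ⟨hx₀, hx⟩
    refine ⟨by nlinarith, fun _ => by nlinarith, fun h => by nlinarith [hconst h]⟩
  · obtain ⟨hlin, hconst⟩ := hright (1 - x) ⟨hx₁', by linarith⟩
    simp only [sub_sub_cancel, sub_zero] at hlin hconst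
    refine ⟨by nlinarith, fun h => by nlinarith [hconst h], fun _ => by nlinarith⟩

end LowerBound

theorem lintegral_Ioo_ofReal_deriv {g g' : ℝ → ℝ} {a b : ℝ} (hab : a ≤ b)
    (hcont : ContinuousOn g (Icc a b)) (hderiv : ∀ x ∈ Ioo a b, HasDerivAt g (g' x) x)
    (hpos : ∀ x ∈ Ioo a b, 0 ≤ g' x) :
    ∫⁻ x in Ioo a b, ENNReal.ofReal (g' x) = ENNReal.ofReal (g b - g a) := by
  have hint := intervalIntegral.integrableOn_deriv_of_nonneg hcont hderiv hpos
  rw [← ofReal_integral_eq_lintegral_ofReal (hint.mono_set Ioo_subset_Ioc_self)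
    (ae_restrict_of_forall_mem measurableSet_Ioo hpos), ← integral_Ioc_eq_integral_Ioo,
    ← intervalIntegral.integral_of_le hab, intervalIntegral.integral_eq_sub_of_hasDerivAt_of_le
    hab hcont hderiv ((intervalIntegrable_iff_integrableOn_Ioc_of_le hab).2 hint)]

/-- The weight `φ(x) = √(x / (1 - x))` on `(0, 1)`. -/
noncomputable def sqrtOdds (x : ℝ) : ℝ := √x / √(1 - x)

theorem sqrtOdds_nonneg (x : ℝ) : 0 ≤ sqrtOdds x :=
  div_nonneg (Real.sqrt_nonneg _) (Real.sqrt_nonneg _)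

theorem hasDerivAt_sqrtOdds {x : ℝ} (hx : x ∈ Ioo (0 : ℝ) 1) :
    HasDerivAt sqrtOdds (sqrtOdds x / (2 * (x * (1 - x)))) x := by
  obtain ⟨hx₀, hx₁⟩ := hx
  have hr := Real.sqrt_pos.2 (sub_pos.2 hx₁)
  have h := (Real.hasDerivAt_sqrt hx₀.ne').div
    ((Real.hasDerivAt_sqrt (sub_pos.2 hx₁).ne').comp x ((hasDerivAt_id x).const_sub 1)) hr.ne'
  refine h.congr_deriv ?_
  have hs2 := Real.sq_sqrt hx₀.le
  have hr2 := Real.sq_sqrt (sub_pos.2 hx₁).le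
  simp only [sqrtOdds, Function.comp_apply]
  field_simp
  rw [hs2, hr2]
  ring

theorem lintegral_sqrtOdds_div {b : ℝ} (hb : b ∈ Ico (0 : ℝ) 1) :
    ∫⁻ x in Ioc 0 b, ENNReal.ofReal (sqrtOdds x / (x * (1 - x))) =
      ENNReal.ofReal (2 * sqrtOdds b) := by
  have hcont : ContinuousOn (fun x => 2 * sqrtOdds x) (Icc 0 b) := by
    refine continuousOn_const.mul (Real.continuous_sqrt.continuousOn.div
      (Real.continuous_sqrt.comp (continuous_const.sub continuous_id)).continuousOn
      fun x hx => ?_)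
    exact (Real.sqrt_pos.2 (by linarith [hx.2, hb.2])).ne'
  rw [← setLIntegral_congr Ioo_ae_eq_Ioc, lintegral_Ioo_ofReal_deriv hb.1 hcont
    (fun x hx => ?_) (fun x hx => ?_)]
  · simp [sqrtOdds]
  · have hx' : x ∈ Ioo (0 : ℝ) 1 := ⟨hx.1, hx.2.trans hb.2⟩
    refine ((hasDerivAt_sqrtOdds hx').const_mul 2).congr_deriv ?_
    field_simp
  · exact div_nonneg (sqrtOdds_nonneg x)
      (mul_nonneg hx.1.le (by linarith [hx.2, hb.2]))

theorem lintegral_sqrtOdds_div_self_lt_top :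
    ∫⁻ x in Ioo (0 : ℝ) 1, ENNReal.ofReal (sqrtOdds x / x) < ∞ := by
  have hderiv : ∀ x ∈ Ioo (0 : ℝ) 1,
      HasDerivAt (fun x => 2 * Real.arcsin √x) (sqrtOdds x / x) x := by
    intro x ⟨hx₀, hx₁⟩
    have hs := Real.sqrt_pos.2 hx₀
    have hs2 := Real.sq_sqrt hx₀.le
    have hs1 : √x < 1 := (Real.sqrt_lt' one_pos).2 (by rwa [one_pow])
    refine (((Real.hasDerivAt_arcsin (by linarith) hs1.ne).comp x
      (Real.hasDerivAt_sqrt hx₀.ne')).const_mul 2).congr_deriv ?_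
    rw [hs2, sqrtOdds]
    field_simp
    exact hs2.symm
  rw [lintegral_Ioo_ofReal_deriv zero_le_one (by fun_prop) hderiv
    fun x hx => div_nonneg (sqrtOdds_nonneg x) hx.1.le]
  exact ENNReal.ofReal_lt_top

theorem inv_one_sub_le_sqrtOdds_div {x : ℝ} (hx : x ∈ Ioo (0 : ℝ) 1) :
    (1 - x)⁻¹ ≤ sqrtOdds x / (x * (1 - x)) := by
  obtain ⟨hx₀, hx₁⟩ := hx
  have hs := Real.sqrt_pos.2 hx₀
  have hr := Real.sqrt_pos.2 (sub_pos.2 hx₁)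
  have hs2 := Real.sq_sqrt hx₀.le
  have hr2 := Real.sq_sqrt (sub_pos.2 hx₁).le
  rw [sqrtOdds, le_div_iff₀ (by positivity), le_div_iff₀ hr,
    show (1 - x)⁻¹ * (x * (1 - x)) = x by field_simp]
  nlinarith [mul_nonneg hs.le (sq_nonneg (√x - √(1 - x)))]

def simplex (m : ℕ) (B : Set ℝ) : Set (Fin (m + 1) → ℝ) :=
  {t | t 0 ∈ B ∧ 0 < t (Fin.last m) ∧ ∀ i : Fin m, t i.succ ≤ t i.castSucc}

theorem measurableSet_setOf_succ_le_castSucc (m : ℕ) :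
    MeasurableSet {t : Fin (m + 1) → ℝ | ∀ i : Fin m, t i.succ ≤ t i.castSucc} := by
  simp only [ofPred_forall]
  exact .iInter fun i => measurableSet_le (measurable_pi_apply _) (measurable_pi_apply _)

theorem measurableSet_simplex (m : ℕ) {B : Set ℝ} (hB : MeasurableSet B) :
    MeasurableSet (simplex m B) :=
  (measurable_pi_apply 0 hB).inter
    ((measurableSet_lt measurable_const (measurable_pi_apply _)).inter
      (measurableSet_setOf_succ_le_castSucc m))

theorem apply_mem_Ioc_of_mem_simplex {m : ℕ} {B : Set ℝ} {t : Fin (m + 1) → ℝ}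
    (ht : t ∈ simplex m B) (i : Fin (m + 1)) : t i ∈ Ioc 0 (t 0) := by
  have hanti : Antitone t := Fin.antitone_iff_succ_le.2 ht.2.2
  exact ⟨ht.2.1.trans_le (hanti (Fin.le_last i)), hanti (Fin.zero_le i)⟩

theorem cons_mem_simplex_succ {m : ℕ} {B : Set ℝ} {x : ℝ} {r : Fin (m + 1) → ℝ} :
    Fin.cons x r ∈ simplex (m + 1) B ↔ x ∈ B ∧ r ∈ simplex m (Iic x) := by
  simp only [simplex, mem_ofPred_eq, Fin.forall_fin_succ, ← Fin.succ_last, Fin.cons_succ,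
    Fin.cons_zero, Fin.castSucc_zero, mem_Iic, ← Fin.succ_castSucc]
  tauto

theorem lintegral_simplex_zero (F : Fin 1 → ℝ → ℝ≥0) (B : Set ℝ) :
    ∫⁻ t in simplex 0 B, ∏ i, (F i (t i) : ℝ≥0∞) = ∫⁻ x in B ∩ Ioi 0, F 0 x := by
  change ∫⁻ t : Fin 1 → ℝ in simplex 0 B, ∏ i, (F i (t i) : ℝ≥0∞) = _
  simp only [Fin.prod_univ_one]
  refine ((volume_preserving_funUnique (Fin 1) ℝ).symm.setLIntegral_comp_preimage_emb
    (MeasurableEquiv.funUnique (Fin 1) ℝ).symm.measurableEmbedding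
    (fun t => (F 0 (t 0) : ℝ≥0∞)) _).symm.trans ?_
  congr 2
  ext x
  simp [simplex, MeasurableEquiv.funUnique, and_comm]

/-- Only an inequality, by `lintegral_prod_le`, so that the `F i` need not be measurable; they are
`ℝ≥0`-valued so that `F 0 x` can be pulled out of the inner integral. -/
theorem lintegral_simplex_succ_le (m : ℕ) (F : Fin (m + 2) → ℝ → ℝ≥0) {B : Set ℝ}
    (hB : MeasurableSet B) :
    ∫⁻ t in simplex (m + 1) B, ∏ i, (F i (t i) : ℝ≥0∞) ≤
      ∫⁻ x in B ∩ Ioi 0, F 0 x * ∫⁻ r in simplex m (Iic x), ∏ j, (F j.succ (r j) : ℝ≥0∞) := by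
  let e := (MeasurableEquiv.piFinSuccAbove (fun _ : Fin (m + 2) => ℝ) 0).symm
  have he : ∀ y, e y = Fin.cons y.1 y.2 := fun y => by
    simp [e, MeasurableEquiv.piFinSuccAbove, Fin.consEquiv]
  have hsplit : ∀ y,
      (e ⁻¹' simplex (m + 1) B).indicator (fun y => ∏ i, (F i (e y i) : ℝ≥0∞)) y =
      (B ∩ Ioi 0).indicator (fun x => (F 0 x : ℝ≥0∞)) y.1 *
        (simplex m (Iic y.1)).indicator (fun r => ∏ j, (F j.succ (r j) : ℝ≥0∞)) y.2 := by
    classical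
    intro y
    have hpos : y.2 ∈ simplex m (Iic y.1) → 0 < y.1 := fun h =>
      (apply_mem_Ioc_of_mem_simplex h 0).1.trans_le h.1
    simp only [indicator_apply, mem_preimage, he, cons_mem_simplex_succ, mem_inter_iff,
      mem_Ioi, Fin.prod_univ_succ, Fin.cons_zero, Fin.cons_succ]
    split_ifs <;> simp_all
  rw [← (volume_preserving_piFinSuccAbove (fun _ : Fin (m + 2) => ℝ) 0).symm
      |>.setLIntegral_comp_preimage_emb e.measurableEmbedding,
    ← lintegral_indicator ((measurableSet_simplex (m + 1) hB).preimage e.measurable),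
    ← lintegral_indicator (hB.inter measurableSet_Ioi), Measure.volume_eq_prod]
  refine (lintegral_prod_le _).trans_eq (lintegral_congr fun x => ?_)
  refine (lintegral_congr fun y => hsplit (x, y)).trans ?_
  dsimp only
  rw [lintegral_const_mul' _ _ ((indicator_le_self _ _ x).trans_lt ENNReal.coe_lt_top).ne,
    lintegral_indicator (measurableSet_simplex m measurableSet_Iic)]
  exact (indicator_mul_left _ _
    fun x => ∫⁻ r in simplex m (Iic x), ∏ j, (F j.succ (r j) : ℝ≥0∞)).symm

theorem setLIntegral_Ioc_le_of_le_sqrtOdds {G : ℝ → ℝ≥0∞} {K b : ℝ} (hK : 0 ≤ K)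
    (hb : b ∈ Ico (0 : ℝ) 1)
    (hG : ∀ x ∈ Ioo (0 : ℝ) 1, G x ≤ ENNReal.ofReal (K * (sqrtOdds x / (x * (1 - x))))) :
    ∫⁻ x in Ioc 0 b, G x ≤ ENNReal.ofReal (2 * K * sqrtOdds b) := by
  calc ∫⁻ x in Ioc 0 b, G x
      ≤ ∫⁻ x in Ioc 0 b, ENNReal.ofReal K * ENNReal.ofReal (sqrtOdds x / (x * (1 - x))) :=
        setLIntegral_mono' measurableSet_Ioc fun x hx =>
          (hG x ⟨hx.1, hx.2.trans_lt hb.2⟩).trans_eq (ENNReal.ofReal_mul hK)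
    _ = ENNReal.ofReal (2 * K * sqrtOdds b) := by
        rw [lintegral_const_mul' _ _ ENNReal.ofReal_ne_top, lintegral_sqrtOdds_div hb,
          ← ENNReal.ofReal_mul hK, mul_left_comm, mul_assoc]

theorem lintegral_simplex_Iic_le {C : ℝ} (hC : 0 ≤ C) {m : ℕ} {F : Fin (m + 1) → ℝ → ℝ≥0}
    (hmid : ∀ i, ∀ x ∈ Ioo (0 : ℝ) 1, (F i x : ℝ≥0∞) ≤ ENNReal.ofReal (C / (x * (1 - x))))
    (hlast : ∀ x ∈ Ioo (0 : ℝ) 1, (F (Fin.last m) x : ℝ≥0∞) ≤ ENNReal.ofReal (C / (1 - x)))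
    {b : ℝ} (hb : b ∈ Ico (0 : ℝ) 1) :
    ∫⁻ t in simplex m (Iic b), ∏ i, (F i (t i) : ℝ≥0∞) ≤
      ENNReal.ofReal ((2 * C) ^ (m + 1) * sqrtOdds b) := by
  induction m generalizing b with
  | zero =>
    rw [lintegral_simplex_zero, Iic_inter_Ioi]
    refine (setLIntegral_Ioc_le_of_le_sqrtOdds hC hb fun x hx => (hlast x hx).trans ?_).trans_eq
      (by ring_nf)
    rw [div_eq_mul_inv]
    exact ENNReal.ofReal_le_ofReal
      (mul_le_mul_of_nonneg_left (inv_one_sub_le_sqrtOdds_div hx) hC)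
  | succ m ih =>
    refine (lintegral_simplex_succ_le m F measurableSet_Iic).trans ?_
    rw [Iic_inter_Ioi]
    refine (setLIntegral_Ioc_le_of_le_sqrtOdds (K := C * (2 * C) ^ (m + 1)) (by positivity) hb
      fun x hx => ?_).trans_eq (by ring_nf)
    have hinner := ih (F := fun j => F j.succ) (fun j => hmid j.succ)
      (by simpa only [Fin.succ_last] using hlast) ⟨hx.1.le, hx.2⟩
    refine (mul_le_mul' (hmid 0 x hx) hinner).trans_eq ?_
    rw [← ENNReal.ofReal_mul (div_nonneg hC (mul_pos hx.1 (sub_pos.2 hx.2)).le)]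
    congr 1
    ring

theorem lintegral_simplex_Iio_one_lt_top {C : ℝ} (hC : 0 ≤ C) {m : ℕ} {F : Fin (m + 1) → ℝ → ℝ≥0}
    (hmid : ∀ i, ∀ x ∈ Ioo (0 : ℝ) 1, (F i x : ℝ≥0∞) ≤ ENNReal.ofReal (C / (x * (1 - x))))
    (hfirst : ∀ x ∈ Ioo (0 : ℝ) 1, (F 0 x : ℝ≥0∞) ≤ ENNReal.ofReal (C / x))
    (hlast : ∀ x ∈ Ioo (0 : ℝ) 1, (F (Fin.last m) x : ℝ≥0∞) ≤ ENNReal.ofReal (C / (1 - x))) :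
    ∫⁻ t in simplex m (Iio 1), ∏ i, (F i (t i) : ℝ≥0∞) < ∞ := by
  cases m with
  | zero =>
    rw [lintegral_simplex_zero, Iio_inter_Ioi]
    refine (setLIntegral_mono' measurableSet_Ioo (g := fun _ => ENNReal.ofReal (2 * C))
      fun x hx => ?_).trans_lt ?_
    · rcases le_or_gt x (1 / 2) with hx' | hx'
      · refine (hlast x hx).trans (ENNReal.ofReal_le_ofReal ?_)
        rw [div_le_iff₀ (by linarith [hx.2])]
        nlinarith
      · refine (hfirst x hx).trans (ENNReal.ofReal_le_ofReal ?_)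
        rw [div_le_iff₀ hx.1]
        nlinarith
    · rw [setLIntegral_const, Real.volume_Ioo]
      exact ENNReal.mul_lt_top ENNReal.ofReal_lt_top ENNReal.ofReal_lt_top
  | succ m =>
    refine (lintegral_simplex_succ_le m F measurableSet_Iio).trans_lt ?_
    rw [Iio_inter_Ioi]
    have hbound : ∀ x ∈ Ioo (0 : ℝ) 1,
        F 0 x * ∫⁻ r in simplex m (Iic x), ∏ j, (F j.succ (r j) : ℝ≥0∞) ≤
          ENNReal.ofReal (C * (2 * C) ^ (m + 1)) * ENNReal.ofReal (sqrtOdds x / x) := by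
      intro x hx
      have hinner := lintegral_simplex_Iic_le hC (F := fun j => F j.succ) (fun j => hmid j.succ)
        (by simpa only [Fin.succ_last] using hlast) ⟨hx.1.le, hx.2⟩
      refine (mul_le_mul' (hfirst x hx) hinner).trans_eq ?_
      rw [← ENNReal.ofReal_mul (div_nonneg hC hx.1.le), ← ENNReal.ofReal_mul (by positivity)]
      congr 1
      ring
    refine (setLIntegral_mono' measurableSet_Ioo hbound).trans_lt ?_
    rw [lintegral_const_mul' _ _ ENNReal.ofReal_ne_top]
    exact ENNReal.mul_lt_top ENNReal.ofReal_lt_top lintegral_sqrtOdds_div_self_lt_top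

theorem integrableOn_simplex_prod {𝕜 : Type*} [NormedField 𝕜] {C : ℝ} (hC : 0 ≤ C) {m : ℕ}
    {f : Fin (m + 1) → ℝ → 𝕜} (hf : ∀ i, ContinuousOn (f i) (Ioo 0 1))
    (hmid : ∀ i, ∀ x ∈ Ioo (0 : ℝ) 1, ‖f i x‖ ≤ C / (x * (1 - x)))
    (hfirst : ∀ x ∈ Ioo (0 : ℝ) 1, ‖f 0 x‖ ≤ C / x)
    (hlast : ∀ x ∈ Ioo (0 : ℝ) 1, ‖f (Fin.last m) x‖ ≤ C / (1 - x)) :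
    IntegrableOn (fun t => ∏ i, f i (t i)) (simplex m (Iio 1)) := by
  have hmem : ∀ t ∈ simplex m (Iio 1), ∀ i, t i ∈ Ioo 0 1 := fun t ht i =>
    ⟨(apply_mem_Ioc_of_mem_simplex ht i).1, (apply_mem_Ioc_of_mem_simplex ht i).2.trans_lt ht.1⟩
  have henorm : ∀ {i x c}, ‖f i x‖ ≤ c → (‖f i x‖₊ : ℝ≥0∞) ≤ ENNReal.ofReal c := fun h => by
    simpa only [ofReal_norm, enorm_eq_nnnorm] using ENNReal.ofReal_le_ofReal h
  refine ⟨ContinuousOn.aestronglyMeasurable (continuousOn_finsetProd _ fun i _ =>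
      (hf i).comp (continuous_apply i).continuousOn fun t ht => hmem t ht i)
    (measurableSet_simplex m measurableSet_Iio), ?_⟩
  simp only [HasFiniteIntegral, enorm_eq_nnnorm, nnnorm_prod, ENNReal.ofNNReal_finsetProd]
  exact lintegral_simplex_Iio_one_lt_top hC (fun i x hx => henorm (hmid i x hx))
    (fun x hx => henorm (hfirst x hx)) (fun x hx => henorm (hlast x hx))

def truncSimplex (m : ℕ) (s u : ℝ) : Set (Fin (m + 1) → ℝ) :=
  {t | t 0 ≤ u ∧ s ≤ t (Fin.last m) ∧ ∀ i : Fin m, t i.succ ≤ t i.castSucc}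

theorem measurableSet_truncSimplex (m : ℕ) (s u : ℝ) : MeasurableSet (truncSimplex m s u) :=
  (measurableSet_le (measurable_pi_apply 0) measurable_const).inter
    ((measurableSet_le measurable_const (measurable_pi_apply _)).inter
      (measurableSet_setOf_succ_le_castSucc m))

theorem truncSimplex_subset_simplex {m : ℕ} {s u : ℝ} (hs : 0 < s) (hu : u < 1) :
    truncSimplex m s u ⊆ simplex m (Iio 1) :=
  fun _ ⟨h₀, hl, hchain⟩ => ⟨h₀.trans_lt hu, hs.trans_le hl, hchain⟩

theorem tendsto_setIntegral_truncSimplex {E : Type*} [NormedAddCommGroup E] [NormedSpace ℝ E]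
    {m : ℕ} {g : (Fin (m + 1) → ℝ) → E} (hg : IntegrableOn g (simplex m (Iio 1))) :
    Tendsto (fun su : ℝ × ℝ => ∫ t in truncSimplex m su.1 su.2, g t)
      (𝓝[>] 0 ×ˢ 𝓝[<] 1) (𝓝 (∫ t in simplex m (Iio 1), g t)) := by
  have hcover : AECover (volume.restrict (simplex m (Iio 1))) (𝓝[>] 0 ×ˢ 𝓝[<] 1)
      fun su : ℝ × ℝ => truncSimplex m su.1 su.2 := by
    refine ⟨ae_restrict_of_forall_mem (measurableSet_simplex m measurableSet_Iio)
      fun t ⟨h₀, hl, hchain⟩ => ?_, fun su => measurableSet_truncSimplex m su.1 su.2⟩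
    exact ((eventually_nhdsWithin_of_eventually_nhds (eventually_le_nhds hl)).prod_mk
      (eventually_nhdsWithin_of_eventually_nhds (eventually_ge_nhds h₀))).mono
      fun su h => ⟨h.2, h.1, hchain⟩
  refine (hcover.integral_tendsto_of_countably_generated hg).congr' ?_
  filter_upwards [prod_mem_prod self_mem_nhdsWithin self_mem_nhdsWithin] with su hsu
  rw [Measure.restrict_restrict_of_subset (truncSimplex_subset_simplex hsu.1 hsu.2)]

/-- convergence of regularised iterated integrals.  With `γ` a `C¹` path whose
interior avoids the finite set `P` and whose endpoints `p = γ(0)`, `q = γ(1)` may lie in `P`,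
and poles `p₀,…,p_n ∈ P` with `p₀ ≠ q` and `p_n ≠ p`, the truncated iterated integrals over
`{u ≥ t₀ ≥ ⋯ ≥ t_n ≥ s}` converge as `s → 0⁺`, `u → 1⁻`. -/
theorem stmt6 (P : Finset ℂ) (γ γ' : ℝ → ℂ)
    (hγ : ∀ s ∈ Set.Icc (0 : ℝ) 1, HasDerivAt γ (γ' s) s)
    (hγ' : ContinuousOn γ' (Set.Icc (0 : ℝ) 1))
    (havoid : ∀ s ∈ Set.Ioo (0 : ℝ) 1, γ s ∉ P)
    (hγ'0 : γ' 0 ≠ 0) (hγ'1 : γ' 1 ≠ 0)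
    (n : ℕ) (p : Fin (n + 1) → ℂ) (hp : ∀ i, p i ∈ P)
    (hfirst : p 0 ≠ γ 1) (hlast : p (Fin.last n) ≠ γ 0) :
    ∃ L : ℂ, Tendsto
      (fun su : ℝ × ℝ =>
        ∫ t in {t : Fin (n + 1) → ℝ | t 0 ≤ su.2 ∧ su.1 ≤ t (Fin.last n) ∧
            ∀ i : Fin n, t i.succ ≤ t i.castSucc},
          ∏ i, γ' (t i) / (γ (t i) - p i))
      ((𝓝[>] (0 : ℝ)) ×ˢ (𝓝[<] (1 : ℝ))) (𝓝 L) := by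
  have hγc : ContinuousOn γ (Icc 0 1) := fun x hx => (hγ x hx).continuousAt.continuousWithinAt
  have hpole : ∀ i, ∀ x ∈ Ioo (0 : ℝ) 1, γ x ≠ p i := fun i x hx h => havoid x hx (h ▸ hp i)
  obtain ⟨c, hlow, hc⟩ := ((eventually_all.2 fun i => eventually_mul_le_norm_sub hγc
    (hγ 0 ⟨le_rfl, zero_le_one⟩) (hγ 1 ⟨zero_le_one, le_rfl⟩) hγ'0 hγ'1 (hpole i)).and
    self_mem_nhdsWithin).exists
  obtain ⟨B, hB⟩ := isCompact_Icc.exists_bound_of_continuousOn hγ'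
  have hB₀ : 0 ≤ B := (norm_nonneg _).trans (hB 0 ⟨le_rfl, zero_le_one⟩)
  have hfactor : ∀ i, ∀ x ∈ Ioo (0 : ℝ) 1, ∀ w, 0 < w → c * w ≤ ‖γ x - p i‖ →
      ‖γ' x / (γ x - p i)‖ ≤ B / c / w := fun i x hx w hw hle => by
    rw [norm_div, div_div]
    exact div_le_div₀ hB₀ (hB x (Ioo_subset_Icc_self hx)) (mul_pos hc hw) hle
  refine ⟨_, tendsto_setIntegral_truncSimplex (integrableOn_simplex_prod
    (f := fun i x => γ' x / (γ x - p i)) (div_nonneg hB₀ hc.le) (fun i => ?_) ?_ ?_ ?_)⟩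
  · exact (hγ'.mono Ioo_subset_Icc_self).div ((hγc.mono Ioo_subset_Icc_self).sub
      continuousOn_const) fun x hx => sub_ne_zero.2 (hpole i x hx)
  · exact fun i x hx => hfactor i x hx _ (mul_pos hx.1 (sub_pos.2 hx.2)) (hlow i x hx).1
  · exact fun x hx => hfactor 0 x hx _ hx.1 ((hlow 0 x hx).2.1 hfirst.symm)
  · exact fun x hx => hfactor _ x hx _ (sub_pos.2 hx.2) ((hlow _ x hx).2.2 hlast.symm)
end

section
/- Let Z = Σ_{a=1}^m z_a·P_a with z₁,…,z_m distinct complex numbers and P₁,…,P_m nonzero d×d complex matrices satisfying P_aP_b = δ_{ab}P_a and P₁+⋯+P_m = 1. Fix θ ∈ ℝ and an index i, and let φ be a d×d-matrix-valued function on the closed ray {z_i + s·e^{iθ} : s ≥ 0}, of polynomial growth along the ray, which is analytic at z_i (i.e. extends holomorphically to a neighborhood of z_i) with φ(z_i) = P_i. Define Y(t) = t^{−1}·∫₀^∞ φ(z_i + s·e^{iθ})·e^{−(z_i + s·e^{iθ})/t}·e^{iθ} ds for t ∈ H_θ. Then for every δ ∈ (0, π/2), Y(t)·e^{z_i/t}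 → P_i as t → 0 within the closed subsector {t ∈ ℂ* : |arg(t·e^{−iθ})| ≤ π/2 − δ} of H_θ. -/
open Complex Filter Topology MeasureTheory

/-!
Put `Φ s = φ (z_i + s e^{iθ})` and `w = e^{iθ} / t`. Then `Y(t) e^{z_i/t} = ∫₀^∞ w e^{-ws} Φ(s) ds`,
and the kernel `w e^{-ws}` has total mass `1`. In the sector `|arg (t e^{-iθ})| ≤ π/2 - δ` one has
`sin δ · |w| ≤ Re w`, so the distance to `Φ 0 = P_i` is at most
`(sin δ)⁻¹ ∫₀^∞ ρ e^{-ρs} |Φ(s) - Φ(0)| ds` with `ρ = Re w → ∞`. After the substitution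
`s = u / ρ` this is `∫₀^∞ e^{-u} |Φ(u/ρ) - Φ(0)| du`, which tends to `0` by dominated convergence,
thanks to the continuity of `Φ` at `0` and its polynomial growth.
-/

section Laplace

open Set

lemma integrableOn_one_add_pow_mul_exp_neg_mul (N : ℕ) {b : ℝ} (hb : 0 < b) :
    IntegrableOn (fun s : ℝ => (1 + s) ^ N * Real.exp (-(b * s))) (Ioi 0) := by
  refine integrable_of_isBigO_exp_neg (half_pos hb) (by fun_prop) ?_
  have hpow : (fun s : ℝ => (1 + s) ^ N) =o[atTop] fun s => Real.exp (b / 2 * (1 + s)) :=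
    (isLittleO_pow_exp_pos_mul_atTop N (half_pos hb)).comp_tendsto
      (tendsto_atTop_add_const_left _ 1 tendsto_id)
  refine ((hpow.isBigO.mul (Asymptotics.isBigO_refl (fun s => Real.exp (-(b * s))) atTop))
    |>.congr_right fun s => ?_).trans (Asymptotics.isBigO_const_mul_self (Real.exp (b / 2)) _ atTop)
  rw [← Real.exp_add, ← Real.exp_add]
  ring_nf

variable {E : Type*} [NormedAddCommGroup E]

lemma integrableOn_exp_neg_mul_smul [NormedSpace ℝ E] {g : ℝ → E}
    (hg : AEStronglyMeasurable g (volume.restrict (Ioi 0))) {C : ℝ} {N : ℕ}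
    (hgC : ∀ s > 0, ‖g s‖ ≤ C * (1 + s) ^ N) {b : ℝ} (hb : 0 < b) :
    IntegrableOn (fun s => Real.exp (-(b * s)) • g s) (Ioi 0) := by
  refine Integrable.mono' ((integrableOn_one_add_pow_mul_exp_neg_mul N hb).const_mul C)
    ((Real.continuous_exp.comp (by fun_prop)).aestronglyMeasurable.smul hg) ?_
  refine (ae_restrict_iff' measurableSet_Ioi).2 (Eventually.of_forall fun s hs => ?_)
  rw [norm_smul, Real.norm_of_nonneg (Real.exp_pos _).le]
  calc _ ≤ Real.exp (-(b * s)) * (C * (1 + s) ^ N) := by gcongr; exact hgC s hs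
    _ = _ := by ring

lemma integral_mul_exp_neg_mul_smul_eq [NormedSpace ℝ E] (g : ℝ → E) {ρ : ℝ} (hρ : 0 < ρ) :
    ∫ s in Ioi 0, (ρ * Real.exp (-(ρ * s))) • g s
      = ∫ u in Ioi 0, Real.exp (-u) • g (ρ⁻¹ * u) := by
  simpa only [mul_zero, inv_mul_cancel_left₀ hρ.ne', ← integral_smul, smul_smul] using
    integral_comp_mul_left_Ioi' (fun u => Real.exp (-u) • g (ρ⁻¹ * u)) 0 hρ

theorem tendsto_integral_mul_exp_neg_mul_smul [NormedSpace ℝ E] [CompleteSpace E] {g : ℝ → E}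
    (hg : AEStronglyMeasurable g (volume.restrict (Ioi 0))) {C : ℝ} {N : ℕ}
    (hgC : ∀ s > 0, ‖g s‖ ≤ C * (1 + s) ^ N) (hg0 : ContinuousWithinAt g (Ioi 0) 0) :
    Tendsto (fun ρ : ℝ => ∫ s in Ioi 0, (ρ * Real.exp (-(ρ * s))) • g s) atTop
      (𝓝 (g 0)) := by
  have hC : 0 ≤ C := nonneg_of_mul_nonneg_left ((norm_nonneg _).trans (hgC 1 one_pos))
    (by positivity)
  have hlimit : ∫ u in Ioi 0, Real.exp (-u) • g 0 = g 0 := by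
    rw [integral_smul_const, integral_exp_neg_Ioi_zero, one_smul]
  rw [← hlimit]
  refine Tendsto.congr' ((eventually_gt_atTop 0).mono fun ρ hρ =>
    (integral_mul_exp_neg_mul_smul_eq g hρ).symm) ?_
  refine tendsto_integral_filter_of_dominated_convergence
    (fun u => C * ((1 + u) ^ N * Real.exp (-(1 * u)))) ?_ ?_
    ((integrableOn_one_add_pow_mul_exp_neg_mul N one_pos).const_mul C) ?_
  · -- measurability of the rescaled integrand is inherited from integrability of the unscaled one
    filter_upwards [eventually_gt_atTop 0] with ρ hρ
    have := (integrableOn_Ioi_comp_mul_left_iff (fun u => Real.exp (-u) • g (ρ⁻¹ * u)) 0 hρ).1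
      (by simpa only [inv_mul_cancel_left₀ hρ.ne'] using integrableOn_exp_neg_mul_smul hg hgC hρ)
    rw [mul_zero] at this
    exact this.aestronglyMeasurable
  · filter_upwards [eventually_ge_atTop 1] with ρ hρ
    refine (ae_restrict_iff' measurableSet_Ioi).2 (Eventually.of_forall fun u hu => ?_)
    have hu : 0 < u := hu
    have hρu : ρ⁻¹ * u ≤ u := mul_le_of_le_one_left hu.le (inv_le_one_of_one_le₀ hρ)
    rw [norm_smul, Real.norm_of_nonneg (Real.exp_pos _).le, one_mul]
    calc Real.exp (-u) * ‖g (ρ⁻¹ * u)‖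
        ≤ Real.exp (-u) * (C * (1 + ρ⁻¹ * u) ^ N) := by
          gcongr
          exact hgC _ (by positivity)
      _ ≤ Real.exp (-u) * (C * (1 + u) ^ N) := by gcongr
      _ = _ := by ring
  · refine (ae_restrict_iff' measurableSet_Ioi).2 (Eventually.of_forall fun u hu => ?_)
    have hu : 0 < u := hu
    have hscale : Tendsto (fun ρ : ℝ => ρ⁻¹ * u) atTop (𝓝[>] 0) := by
      refine tendsto_nhdsWithin_iff.2 ⟨?_, (eventually_gt_atTop 0).mono fun ρ hρ => ?_⟩
      · simpa using tendsto_inv_atTop_zero.mul_const u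
      · exact mul_pos (inv_pos.2 hρ) hu
    exact (hg0.tendsto.comp hscale).const_smul _

lemma integral_mul_cexp_neg_mul_Ioi {w : ℂ} (hw : 0 < w.re) :
    ∫ s : ℝ in Ioi 0, w * Complex.exp (-w * s) = 1 := by
  have hw0 : w ≠ 0 := fun h => by simp [h] at hw
  rw [integral_const_mul, integral_exp_mul_complex_Ioi (by simpa using hw) 0]
  field_simp
  simp

lemma norm_norm_sub_le_of_norm_le {Φ : ℝ → E} {C : ℝ} {N : ℕ}
    (hΦC : ∀ s > 0, ‖Φ s‖ ≤ C * (1 + s) ^ N) (v : E) :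
    ∀ s > 0, ‖‖Φ s - v‖‖ ≤ (C + ‖v‖) * (1 + s) ^ N := by
  intro s hs
  have h1 : 1 ≤ (1 + s) ^ N := one_le_pow₀ (by linarith)
  calc ‖‖Φ s - v‖‖ ≤ ‖Φ s‖ + ‖v‖ := by rw [norm_norm]; exact norm_sub_le _ _
    _ ≤ C * (1 + s) ^ N + ‖v‖ * (1 + s) ^ N := by
        gcongr
        · exact hΦC s hs
        · exact le_mul_of_one_le_right (norm_nonneg _) h1
    _ = _ := by ring

variable [NormedSpace ℂ E]

lemma norm_mul_cexp_neg_mul_smul (w : ℂ) (s : ℝ) (v : E) :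
    ‖(w * Complex.exp (-w * s)) • v‖ = ‖w‖ * Real.exp (-(w.re * s)) * ‖v‖ := by
  simp [norm_smul, Complex.norm_exp]

lemma integrableOn_mul_cexp_neg_mul_smul {g : ℝ → E}
    (hg : AEStronglyMeasurable g (volume.restrict (Ioi 0))) {C : ℝ} {N : ℕ}
    (hgC : ∀ s > 0, ‖g s‖ ≤ C * (1 + s) ^ N) {w : ℂ} (hw : 0 < w.re) :
    IntegrableOn (fun s : ℝ => (w * Complex.exp (-w * s)) • g s) (Ioi 0) := by
  refine Integrable.mono' ((integrableOn_exp_neg_mul_smul hg hgC hw).norm.const_mul ‖w‖)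
    ((Continuous.aestronglyMeasurable (by fun_prop)).smul hg) (Eventually.of_forall fun s => ?_)
  rw [norm_mul_cexp_neg_mul_smul, norm_smul, Real.norm_of_nonneg (Real.exp_pos _).le, mul_assoc]

lemma norm_integral_mul_cexp_neg_mul_smul_sub_le [CompleteSpace E] {Φ : ℝ → E}
    (hΦ : AEStronglyMeasurable Φ (volume.restrict (Ioi 0))) {C : ℝ} {N : ℕ}
    (hΦC : ∀ s > 0, ‖Φ s‖ ≤ C * (1 + s) ^ N) {κ : ℝ} (hκ : 0 < κ) {w : ℂ} (hw : 0 < w.re)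
    (hκw : κ * ‖w‖ ≤ w.re) :
    ‖(∫ s : ℝ in Ioi 0, (w * Complex.exp (-w * s)) • Φ s) - Φ 0‖ ≤
      κ⁻¹ * ∫ s in Ioi 0, (w.re * Real.exp (-(w.re * s))) • ‖Φ s - Φ 0‖ := by
  have hwκ : ‖w‖ ≤ κ⁻¹ * w.re := by rw [le_inv_mul_iff₀ hκ]; exact hκw
  have hsub : (∫ s : ℝ in Ioi 0, (w * Complex.exp (-w * s)) • Φ s) - Φ 0
      = ∫ s : ℝ in Ioi 0, (w * Complex.exp (-w * s)) • (Φ s - Φ 0) := by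
    simp only [smul_sub]
    rw [integral_sub (integrableOn_mul_cexp_neg_mul_smul hΦ hΦC hw)
      (integrableOn_mul_cexp_neg_mul_smul aestronglyMeasurable_const
        (C := ‖Φ 0‖) (N := 0) (by simp) hw), integral_smul_const,
      integral_mul_cexp_neg_mul_Ioi hw, one_smul]
  rw [hsub, ← integral_const_mul]
  refine norm_integral_le_of_norm_le (by
      simpa only [smul_eq_mul, mul_assoc] using
        ((integrableOn_exp_neg_mul_smul (g := fun s => ‖Φ s - Φ 0‖)
          (hΦ.sub aestronglyMeasurable_const).norm
          (norm_norm_sub_le_of_norm_le hΦC (Φ 0)) hw).const_mul w.re).const_mul κ⁻¹)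
    (Eventually.of_forall fun s => ?_)
  rw [norm_mul_cexp_neg_mul_smul, smul_eq_mul]
  calc _ ≤ κ⁻¹ * w.re * Real.exp (-(w.re * s)) * ‖Φ s - Φ 0‖ := by gcongr
    _ = _ := by ring

theorem tendsto_integral_mul_cexp_neg_mul_smul [CompleteSpace E] {Φ : ℝ → E}
    (hΦ : AEStronglyMeasurable Φ (volume.restrict (Ioi 0))) {C : ℝ} {N : ℕ}
    (hΦC : ∀ s > 0, ‖Φ s‖ ≤ C * (1 + s) ^ N) (hΦ0 : ContinuousWithinAt Φ (Ioi 0) 0)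
    {l : Filter ℂ} (hl : Tendsto re l atTop) {κ : ℝ} (hκ : 0 < κ)
    (hsector : ∀ᶠ w in l, κ * ‖w‖ ≤ w.re) :
    Tendsto (fun w : ℂ => ∫ s : ℝ in Ioi 0, (w * Complex.exp (-w * s)) • Φ s) l
      (𝓝 (Φ 0)) := by
  have hreal := (tendsto_integral_mul_exp_neg_mul_smul (g := fun s => ‖Φ s - Φ 0‖)
    (hΦ.sub aestronglyMeasurable_const).norm (norm_norm_sub_le_of_norm_le hΦC (Φ 0))
    (hΦ0.sub continuousWithinAt_const).norm).comp hl
  rw [sub_self, norm_zero] at hreal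
  rw [tendsto_iff_norm_sub_tendsto_zero]
  refine squeeze_zero' (Eventually.of_forall fun _ => norm_nonneg _) ?_
    (by simpa using hreal.const_mul κ⁻¹)
  filter_upwards [hsector, hl.eventually_gt_atTop 0] with w hκw hw
  exact norm_integral_mul_cexp_neg_mul_smul_sub_le hΦ hΦC hκ hw hκw

end Laplace

section Sector

open Real

lemma sin_mul_norm_le_re_of_abs_arg_le {u : ℂ} {δ : ℝ} (hδ : 0 ≤ δ)
    (hu : |arg u| ≤ π / 2 - δ) : Real.sin δ * ‖u‖ ≤ u.re := by
  have hcos : Real.sin δ ≤ Real.cos (arg u) := by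
    rw [← Real.cos_pi_div_two_sub, ← Real.cos_abs (arg u)]
    exact Real.cos_le_cos_of_nonneg_of_le_pi (abs_nonneg _) (by linarith [pi_pos]) hu
  rw [← norm_mul_cos_arg u, mul_comm]
  gcongr

def closedSector (θ δ : ℝ) : Set ℂ :=
  {t : ℂ | t ≠ 0 ∧ |arg (t * Complex.exp (-(θ : ℂ) * I))| ≤ π / 2 - δ}

lemma sin_mul_norm_le_re_exp_div_of_mem_closedSector {θ δ : ℝ} {t : ℂ} (hδ : 0 ≤ δ)
    (ht : t ∈ closedSector θ δ) :
    Real.sin δ * ‖Complex.exp (θ * I) / t‖ ≤ (Complex.exp (θ * I) / t).re := by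
  have harg : arg (t * Complex.exp (-(θ : ℂ) * I)) ≠ π := fun h => by
    have := ht.2
    rw [h, abs_of_pos pi_pos] at this
    linarith [pi_pos]
  rw [show Complex.exp (θ * I) / t = (t * Complex.exp (-(θ : ℂ) * I))⁻¹ by
    rw [mul_inv, ← Complex.exp_neg, neg_mul, neg_neg, div_eq_inv_mul]]
  refine sin_mul_norm_le_re_of_abs_arg_le hδ ?_
  rw [arg_inv, if_neg harg, abs_neg]
  exact ht.2

lemma tendsto_re_exp_div_nhdsWithin_closedSector {θ δ : ℝ} (hδ : 0 < δ) (hδπ : δ < π) :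
    Tendsto (fun t => (Complex.exp (θ * I) / t).re) (𝓝[closedSector θ δ] 0) atTop := by
  have hnorm :
      Tendsto (fun t => ‖Complex.exp (θ * I) / t‖) (𝓝[closedSector θ δ] 0) atTop := by
    simpa [Complex.norm_exp] using tendsto_norm_inv_nhdsNE_zero_atTop.mono_left
      (nhdsWithin_mono _ fun t (ht : t ∈ closedSector θ δ) => ht.1)
  exact tendsto_atTop_mono' _
    (eventually_nhdsWithin_of_forall fun t => sin_mul_norm_le_re_exp_div_of_mem_closedSector hδ.le)
    (hnorm.const_mul_atTop (Real.sin_pos_of_pos_of_lt_pi hδ hδπ))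

end Sector

attribute [local instance] Matrix.normedAddCommGroup Matrix.normedSpace

theorem stmt10_general {d : ℕ} {m : ℕ} (z : Fin m → ℂ)
    (P : Fin m → Matrix (Fin d) (Fin d) ℂ)
    (θ : ℝ) (i : Fin m) (φ : ℂ → Matrix (Fin d) (Fin d) ℂ)
    (hφmeas : AEStronglyMeasurable
      (fun s : ℝ => φ (z i + (s : ℂ) * Complex.exp ((θ : ℂ) * Complex.I)))
      (volume.restrict (Set.Ici (0 : ℝ))))
    (c : ℝ) (N : ℕ)
    (hgrow : ∀ s : ℝ, 0 ≤ s →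
      ‖φ (z i + (s : ℂ) * Complex.exp ((θ : ℂ) * Complex.I))‖ ≤ c * (1 + s) ^ N)
    (r : ℝ) (hr : 0 < r) (hφanal : DifferentiableOn ℂ φ (Metric.ball (z i) r))
    (hφi : φ (z i) = P i) :
    ∀ δ : ℝ, 0 < δ → δ < Real.pi / 2 →
      Tendsto (fun t : ℂ => Complex.exp (z i / t) •
          (t⁻¹ • ∫ s in Set.Ici (0 : ℝ),
            (Complex.exp (-(z i + (s : ℂ) * Complex.exp ((θ : ℂ) * Complex.I)) / t) *
              Complex.exp ((θ : ℂ) * Complex.I)) •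
              φ (z i + (s : ℂ) * Complex.exp ((θ : ℂ) * Complex.I))))
        (𝓝[{t : ℂ | t ≠ 0 ∧
            |Complex.arg (t * Complex.exp (-(θ : ℂ) * Complex.I))| ≤ Real.pi / 2 - δ}] 0)
        (𝓝 (P i)) := by
  intro δ hδ hδ'
  set e := Complex.exp ((θ : ℂ) * Complex.I)
  set Φ : ℝ → Matrix (Fin d) (Fin d) ℂ := fun s => φ (z i + (s : ℂ) * e)
  have hφz : ContinuousAt φ (z i) :=
    hφanal.continuousOn.continuousAt (Metric.ball_mem_nhds _ hr)
  have hΦ0 : ContinuousWithinAt Φ (Set.Ioi 0) 0 :=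
    (ContinuousAt.comp (g := φ) (by simpa using hφz) (by fun_prop)).continuousWithinAt
  have hlaplace := (tendsto_integral_mul_cexp_neg_mul_smul
    (hφmeas.mono_measure (Measure.restrict_mono Set.Ioi_subset_Ici_self le_rfl))
    (fun s hs => hgrow s hs.le) hΦ0
    (tendsto_map'_iff.2 (tendsto_re_exp_div_nhdsWithin_closedSector (θ := θ) hδ (by linarith)))
    (Real.sin_pos_of_pos_of_lt_pi hδ (by linarith))
    (eventually_map.2 (eventually_nhdsWithin_of_forall fun t =>
      sin_mul_norm_le_re_exp_div_of_mem_closedSector hδ.le))).comp tendsto_map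
  simp only [Φ, Complex.ofReal_zero, zero_mul, add_zero, hφi] at hlaplace
  refine hlaplace.congr fun t => ?_
  simp only [Function.comp_apply, integral_Ici_eq_integral_Ioi, ← integral_smul, smul_smul]
  refine setIntegral_congr_fun measurableSet_Ioi fun s _ => ?_
  congr 1
  calc e / t * Complex.exp (-(e / t) * s)
      = e / t * Complex.exp (z i / t + -(z i + s * e) / t) := by ring_nf
    _ = Complex.exp (z i / t) * (t⁻¹ * (Complex.exp (-(z i + s * e) / t) * e)) := by
      rw [Complex.exp_add]; ring

/-- if `φ` is of polynomial growth along the ray `z_i + ℝ_{≥0} e^{iθ}` and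
analytic at `z_i` with `φ(z_i) = P_i`, then the Fourier–Laplace transform
`Y(t) = t⁻¹ ∫₀^∞ φ(z_i+s e^{iθ}) e^{-(z_i+s e^{iθ})/t} e^{iθ} ds` satisfies
`Y(t) e^{z_i/t} → P_i` as `t → 0` in every closed subsector
`{|arg (t e^{-iθ})| ≤ π/2 - δ}` of `H_θ`. -/
theorem stmt10 {d : ℕ} {m : ℕ} (z : Fin m → ℂ) (hz : Function.Injective z)
    (P : Fin m → Matrix (Fin d) (Fin d) ℂ) (hPne : ∀ a, P a ≠ 0)
    (hmul : ∀ a b, P a * P b = if a = b then P a else 0)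
    (hsum : ∑ a, P a = 1)
    (θ : ℝ) (i : Fin m) (φ : ℂ → Matrix (Fin d) (Fin d) ℂ)
    (hφmeas : AEStronglyMeasurable
      (fun s : ℝ => φ (z i + (s : ℂ) * Complex.exp ((θ : ℂ) * Complex.I)))
      (volume.restrict (Set.Ici (0 : ℝ))))
    (c : ℝ) (N : ℕ)
    (hgrow : ∀ s : ℝ, 0 ≤ s →
      ‖φ (z i + (s : ℂ) * Complex.exp ((θ : ℂ) * Complex.I))‖ ≤ c * (1 + s) ^ N)
    (r : ℝ) (hr : 0 < r) (hφanal : DifferentiableOn ℂ φ (Metric.ball (z i) r))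
    (hφi : φ (z i) = P i) :
    ∀ δ : ℝ, 0 < δ → δ < Real.pi / 2 →
      Tendsto (fun t : ℂ => Complex.exp (z i / t) •
          (t⁻¹ • ∫ s in Set.Ici (0 : ℝ),
            (Complex.exp (-(z i + (s : ℂ) * Complex.exp ((θ : ℂ) * Complex.I)) / t) *
              Complex.exp ((θ : ℂ) * Complex.I)) •
              φ (z i + (s : ℂ) * Complex.exp ((θ : ℂ) * Complex.I))))
        (𝓝[{t : ℂ | t ≠ 0 ∧
            |Complex.arg (t * Complex.exp (-(θ : ℂ) * Complex.I))| ≤ Real.pi / 2 - δ}] 0)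
        (𝓝 (P i)) :=
  stmt10_general z P θ i φ hφmeas c N hgrow r hr hφanal hφi
end

section
/- Let V be a complex vector space and U ⊆ V a subspace. If φ : V → V and ψ : V → V are non-commutative power series that both preserve U, then the composition ψ∘φ preserves U. -/
/-- A non-commutative power series `U → V`: a sequence of `n`-multilinear maps `Uⁿ → V`
for `n ≥ 1` (the `n = 0` component is irrelevant). -/
def NCSeries (U V : Type*) [AddCommGroup U] [Module ℂ U] [AddCommGroup V] [Module ℂ V] :=
  ∀ n : ℕ, MultilinearMap ℂ (fun _ : Fin n => U) V

/-- The `n`-th component of the composition `ψ ∘ φ` of non-commutative power series,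
as a function: `(ψ∘φ)_n(u₁,…,u_n) = Σ_{0=i₀<⋯<i_k=n} ψ_k(φ_{i₁-i₀}(u₁,…), …)`. -/
noncomputable def ncComp {U V W : Type*} [AddCommGroup U] [Module ℂ U]
    [AddCommGroup V] [Module ℂ V] [AddCommGroup W] [Module ℂ W]
    (ψ : NCSeries V W) (φ : NCSeries U V) (n : ℕ) (v : Fin n → U) : W :=
  ∑ c : Composition n,
    ψ c.length (fun j => φ (c.blocksFun j) (v ∘ c.embedding j))

/-- The components of the identity non-commutative power series, as functions:
`(id)₁ = id` and `(id)_n = 0` for `n ≠ 1`. -/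
def ncIdFun (V : Type*) [AddCommGroup V] [Module ℂ V] : ∀ n : ℕ, (Fin n → V) → V
  | 1, v => v 0
  | _, _ => 0

/-- `ψ` is a two-sided compositional inverse of `φ`. -/
def NCInverse {U V : Type*} [AddCommGroup U] [Module ℂ U] [AddCommGroup V] [Module ℂ V]
    (φ : NCSeries U V) (ψ : NCSeries V U) : Prop :=
  (∀ n : ℕ, 1 ≤ n → ∀ v : Fin n → U, ncComp ψ φ n v = ncIdFun U n v) ∧
  (∀ n : ℕ, 1 ≤ n → ∀ v : Fin n → V, ncComp φ ψ n v = ncIdFun V n v)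

/-- A sequence of `n`-ary functions on `V` preserves a subspace `U ⊆ V` if all its
symmetrisations map `U` into `U`. -/
def FunPreserves {V : Type*} [AddCommGroup V] [Module ℂ V]
    (f : ∀ n : ℕ, (Fin n → V) → V) (U : Submodule ℂ V) : Prop :=
  ∀ n : ℕ, 1 ≤ n → ∀ v : Fin n → V, (∀ i, v i ∈ U) →
    (∑ σ : Equiv.Perm (Fin n), f n (v ∘ σ)) ∈ U

/-!
Symmetrising over all orderings of the inputs, the summand of `(ψ ∘ φ)ₙ` indexed by a
composition `c` does not change if `φ` is symmetrised inside each block of `c`, up to the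
factor `∏ⱼ (cⱼ)!`, and permuting the blocks of `c` permutes the arguments of `ψ`. Averaging over
the block permutations of each composition therefore writes the symmetrised `(ψ ∘ φ)ₙ` as a
rational combination of symmetrisations of `ψ` evaluated at symmetrisations of `φ` on vectors
of `U`.
-/

open Finset Equiv

namespace Composition

variable {n : ℕ}

def permuteBlocks (c : Composition n) (e : Perm (Fin c.length)) : Composition n where
  blocks := List.ofFn fun j => c.blocksFun (e j)
  blocks_pos := by
    simp only [List.mem_ofFn]
    rintro _ ⟨j, rfl⟩
    exact c.one_le_blocksFun _
  blocks_sum := by rw [List.sum_ofFn, Equiv.sum_comp e c.blocksFun, c.sum_blocksFun]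

section permuteBlocks

variable (c : Composition n) (e : Perm (Fin c.length))

theorem length_permuteBlocks : (c.permuteBlocks e).length = c.length := List.length_ofFn

theorem blocksFun_permuteBlocks (j : Fin (c.permuteBlocks e).length) :
    (c.permuteBlocks e).blocksFun j = c.blocksFun (e (Fin.cast (c.length_permuteBlocks e) j)) :=
  List.getElem_ofFn ..

theorem permuteBlocks_one : c.permuteBlocks 1 = c :=
  Composition.ext c.ofFn_blocksFun

theorem permuteBlocks_permuteBlocks (e' : Perm (Fin (c.permuteBlocks e).length)) :
    (c.permuteBlocks e).permuteBlocks e' =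
      c.permuteBlocks (e * permCongr (finCongr (c.length_permuteBlocks e)) e') := by
  refine Composition.ext ((List.ofFn_congr (c.length_permuteBlocks e) _).trans ?_)
  simp only [blocksFun_permuteBlocks]
  rfl

end permuteBlocks

-- `π` acts through `π⁻¹`, since `permuteBlocks` is a right action.
instance (k : ℕ) : MulAction (Perm (Fin k)) {c : Composition n // c.length = k} where
  smul π c := ⟨c.1.permuteBlocks (permCongr (finCongr c.2.symm) π⁻¹),
    (c.1.length_permuteBlocks _).trans c.2⟩
  one_smul c := Subtype.ext <| by
    change c.1.permuteBlocks (permCongr _ 1⁻¹) = c.1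
    convert c.1.permuteBlocks_one
    ext
    simp [permCongr_apply]
  mul_smul π π' c := Subtype.ext <| by
    change c.1.permuteBlocks _ = (c.1.permuteBlocks _).permuteBlocks _
    rw [permuteBlocks_permuteBlocks]
    congr 1

theorem sum_sum_permuteBlocks_of_length_eq {M : Type*} [AddCommMonoid M]
    (f : Composition n → M) (k : ℕ) :
    ∑ c : {c : Composition n // c.length = k}, ∑ e : Perm (Fin c.1.length),
      f (c.1.permuteBlocks e) = ∑ c : {c : Composition n // c.length = k}, k.factorial • f c := by
  have hπ (c : {c : Composition n // c.length = k}) :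
      ∑ e : Perm (Fin c.1.length), f (c.1.permuteBlocks e) = ∑ π : Perm (Fin k), f (π • c).1 :=
    ((Equiv.inv _).trans (permCongr (finCongr c.2.symm))).sum_comp (f ∘ c.1.permuteBlocks) |>.symm
  simp_rw [hπ, ← smul_sum]
  rw [sum_comm]
  refine (sum_congr rfl fun π _ => Equiv.sum_comp (MulAction.toPerm π)
    fun c : {c : Composition n // c.length = k} => f c.1).trans ?_
  rw [sum_const, card_univ, Fintype.card_perm, Fintype.card_fin]

theorem sum_sum_permuteBlocks {M : Type*} [AddCommMonoid M] (f : Composition n → M) :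
    ∑ c : Composition n, ∑ e : Perm (Fin c.length), f (c.permuteBlocks e) =
      ∑ c : Composition n, c.length.factorial • f c := by
  classical
  have hlen (c : Composition n) (_ : c ∈ univ) : c.length ∈ range (n + 1) :=
    mem_range.2 (Nat.lt_succ_of_le c.length_le)
  rw [← sum_fiberwise_of_maps_to hlen, ← sum_fiberwise_of_maps_to hlen]
  refine sum_congr rfl fun k _ => ?_
  have hfib : ∀ c, c ∈ ({c ∈ univ | c.length = k} : Finset (Composition n)) ↔ c.length = k := by
    simp
  rw [sum_subtype _ hfib, sum_subtype _ hfib, sum_sum_permuteBlocks_of_length_eq]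
  exact sum_congr rfl fun c _ => by rw [c.2]

theorem sum_eq_sum_inv_smul_sum_permuteBlocks {𝕜 M : Type*} [DivisionRing 𝕜] [CharZero 𝕜]
    [AddCommGroup M] [Module 𝕜 M] (f : Composition n → M) :
    ∑ c : Composition n, f c = ∑ c : Composition n,
      (c.length.factorial : 𝕜)⁻¹ • ∑ e : Perm (Fin c.length), f (c.permuteBlocks e) := by
  have h := sum_sum_permuteBlocks fun c : Composition n => (c.length.factorial : 𝕜)⁻¹ • f c
  simp only [length_permuteBlocks, ← smul_sum, ← Nat.cast_smul_eq_nsmul 𝕜, smul_smul] at h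
  rw [h]
  refine sum_congr rfl fun c _ => ?_
  rw [mul_inv_cancel₀ (Nat.cast_ne_zero.2 c.length.factorial_ne_zero), one_smul]

theorem exists_perm_embedding_eq (c c' : Composition n)
    (E : (Σ j, Fin (c'.blocksFun j)) ≃ Σ j, Fin (c.blocksFun j)) :
    ∃ s : Perm (Fin n), ∀ j i, s (c'.embedding j i) = c.embedding (E ⟨j, i⟩).1 (E ⟨j, i⟩).2 :=
  ⟨c'.blocksFinEquiv.symm.trans (E.trans c.blocksFinEquiv), fun j i => by
    simp only [trans_apply]
    rw [show c'.blocksFinEquiv.symm (c'.embedding j i) = ⟨j, i⟩ from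
      c'.blocksFinEquiv.symm_apply_apply ⟨j, i⟩]
    rfl⟩

end Composition

theorem apply_comp_finCast {α β : Type*} (f : ∀ m, (Fin m → α) → β) {m m' : ℕ} (h : m = m')
    (w : Fin m' → α) : f m (w ∘ Fin.cast h) = f m' w := by
  subst h
  rfl

section BlockApply

variable {E F G : Type*} [AddCommGroup E] [Module ℂ E] [AddCommGroup F] [Module ℂ F]
  [AddCommGroup G] [Module ℂ G] {n : ℕ}

-- `ncComp ψ φ n v` is `∑ c, ψ c.length (blockApply φ c v)` by definition.
def blockApply (φ : NCSeries E F) (c : Composition n) (u : Fin n → E) : Fin c.length → F :=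
  fun j => φ (c.blocksFun j) (u ∘ c.embedding j)

def blockSymm (φ : NCSeries E F) (c : Composition n) (u : Fin n → E) : Fin c.length → F :=
  fun j => ∑ y : Perm (Fin (c.blocksFun j)), φ (c.blocksFun j) ((u ∘ c.embedding j) ∘ y)

theorem sum_perm_blockApply_of_blocksFun_eq {M : Type*} [AddCommMonoid M] (φ : NCSeries E F)
    (c c' : Composition n) (ρ : Fin c'.length ≃ Fin c.length)
    (h : ∀ j, c'.blocksFun j = c.blocksFun (ρ j)) (f : (Fin c'.length → F) → M) (v : Fin n → E) :
    ∑ σ : Perm (Fin n), f (blockApply φ c' (v ∘ σ)) =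
      ∑ σ : Perm (Fin n), f (blockApply φ c (v ∘ σ) ∘ ρ) := by
  obtain ⟨s, hs⟩ := c.exists_perm_embedding_eq c' (sigmaCongr ρ fun j => finCongr (h j))
  have hblock (u : Fin n → E) : blockApply φ c' (u ∘ s) = blockApply φ c u ∘ ρ := by
    funext j
    have hu : (u ∘ s) ∘ c'.embedding j = (u ∘ c.embedding (ρ j)) ∘ Fin.cast (h j) := by
      funext i
      exact congrArg u (hs j i)
    exact (congrArg _ hu).trans (apply_comp_finCast (fun m => φ m) (h j) _)
  rw [← Equiv.sum_comp (Equiv.mulRight s)]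
  exact sum_congr rfl fun σ _ => congrArg f (hblock (v ∘ σ))

theorem sum_perm_blockApply_permuteBlocks (ψ : NCSeries F G) (φ : NCSeries E F)
    (c : Composition n) (e : Perm (Fin c.length)) (v : Fin n → E) :
    ∑ σ : Perm (Fin n), ψ _ (blockApply φ (c.permuteBlocks e) (v ∘ σ)) =
      ∑ σ : Perm (Fin n), ψ c.length (blockApply φ c (v ∘ σ) ∘ e) := by
  rw [sum_perm_blockApply_of_blocksFun_eq φ c _ ((finCongr (c.length_permuteBlocks e)).trans e)
    (c.blocksFun_permuteBlocks e)]
  exact sum_congr rfl fun σ _ =>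
    apply_comp_finCast (fun m => ψ m) (c.length_permuteBlocks e) (blockApply φ c (v ∘ σ) ∘ e)

theorem prod_factorial_smul_sum_perm_blockApply (φ : NCSeries E F) (c : Composition n)
    (Ψ : MultilinearMap ℂ (fun _ : Fin c.length => F) G) (v : Fin n → E) :
    (∏ j, (c.blocksFun j).factorial) • ∑ σ : Perm (Fin n), Ψ (blockApply φ c (v ∘ σ)) =
      ∑ σ : Perm (Fin n), Ψ (blockSymm φ c (v ∘ σ)) := by
  have hblock (r : ∀ j, Perm (Fin (c.blocksFun j))) : ∃ s : Perm (Fin n),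
      ∀ u : Fin n → E, blockApply φ c (u ∘ s) = fun j => φ _ ((u ∘ c.embedding j) ∘ r j) := by
    obtain ⟨s, hs⟩ := c.exists_perm_embedding_eq c (sigmaCongrRight r)
    exact ⟨s, fun u => funext fun j => congrArg _ (funext fun i => congrArg u (hs j i))⟩
  choose s hs using hblock
  have hsymm (σ : Perm (Fin n)) : Ψ (blockSymm φ c (v ∘ σ)) =
      ∑ r : ∀ j, Perm (Fin (c.blocksFun j)), Ψ (blockApply φ c ((v ∘ σ) ∘ s r)) := by
    simp only [hs]
    exact Ψ.map_sum _
  simp only [hsymm]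
  rw [sum_comm]
  have hreindex (r : ∀ j, Perm (Fin (c.blocksFun j))) :
      ∑ σ : Perm (Fin n), Ψ (blockApply φ c ((v ∘ σ) ∘ s r)) =
        ∑ σ : Perm (Fin n), Ψ (blockApply φ c (v ∘ σ)) :=
    Equiv.sum_comp (Equiv.mulRight (s r)) fun σ : Perm (Fin n) => Ψ (blockApply φ c (v ∘ σ))
  simp only [hreindex, sum_const, card_univ, Fintype.card_pi, Fintype.card_perm, Fintype.card_fin]

end BlockApply

section Preserves

variable {V : Type*} [AddCommGroup V] [Module ℂ V] {U : Submodule ℂ V} {φ ψ : NCSeries V V}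
  {n : ℕ}

theorem blockSymm_mem (hφ : FunPreserves (fun n => φ n) U) (c : Composition n) {u : Fin n → V}
    (hu : ∀ i, u i ∈ U) (j : Fin c.length) : blockSymm φ c u j ∈ U :=
  hφ _ (c.one_le_blocksFun j) _ fun _ => hu _

theorem sum_permuteBlocks_sum_perm_mem (hφ : FunPreserves (fun n => φ n) U)
    (hψ : FunPreserves (fun n => ψ n) U) {c : Composition n} (hc : 1 ≤ c.length) {v : Fin n → V}
    (hv : ∀ i, v i ∈ U) :
    ∑ e : Perm (Fin c.length), ∑ σ : Perm (Fin n),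
      ψ _ (blockApply φ (c.permuteBlocks e) (v ∘ σ)) ∈ U := by
  let Ψ : MultilinearMap ℂ (fun _ : Fin c.length => V) V :=
    ∑ e : Perm (Fin c.length), (ψ c.length).domDomCongr e
  have hΨ (w : Fin c.length → V) : Ψ w = ∑ e : Perm (Fin c.length), ψ c.length (w ∘ e) :=
    _root_.sum_apply ..
  have hsum : ∑ e : Perm (Fin c.length), ∑ σ : Perm (Fin n),
      ψ _ (blockApply φ (c.permuteBlocks e) (v ∘ σ)) =
        ∑ σ : Perm (Fin n), Ψ (blockApply φ c (v ∘ σ)) := by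
    simp only [sum_perm_blockApply_permuteBlocks, hΨ]
    exact sum_comm
  have hN : ((∏ j, (c.blocksFun j).factorial : ℕ) : ℂ) ≠ 0 :=
    Nat.cast_ne_zero.2 (prod_ne_zero_iff.2 fun j _ => (c.blocksFun j).factorial_ne_zero)
  rw [hsum, ← U.smul_mem_iff hN, Nat.cast_smul_eq_nsmul, prod_factorial_smul_sum_perm_blockApply]
  refine U.sum_mem fun σ _ => ?_
  rw [hΨ]
  exact hψ _ hc _ fun j => blockSymm_mem hφ c (fun i => hv _) j

end Preserves

/-- if the non-commutative power series `φ, ψ : V → V` both preserve the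
subspace `U ⊆ V`, then so does their composition `ψ ∘ φ`. -/
theorem stmt13 {V : Type*} [AddCommGroup V] [Module ℂ V] (U : Submodule ℂ V)
    (φ ψ : NCSeries V V)
    (hφ : FunPreserves (fun n => φ n) U) (hψ : FunPreserves (fun n => ψ n) U) :
    FunPreserves (ncComp ψ φ) U := by
  intro n hn v hv
  have hswap : ∑ σ : Perm (Fin n), ncComp ψ φ n (v ∘ σ) =
      ∑ c : Composition n, ∑ σ : Perm (Fin n), ψ c.length (blockApply φ c (v ∘ σ)) :=
    sum_comm
  rw [hswap, Composition.sum_eq_sum_inv_smul_sum_permuteBlocks (𝕜 := ℂ)]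
  exact U.sum_mem fun c _ =>
    U.smul_mem _ (sum_permuteBlocks_sum_perm_mem hφ hψ (c.length_pos_of_pos hn) hv)
end

section
/- A transform F is invertible (i.e. there exists a transform G with G∘F = id = F∘G) if and only if the function F₁ : ℂ → ℂ is nowhere vanishing. -/
/-!
If `F₁` is nowhere zero, a left inverse `G` of `F` can be built degree by degree: in `(G∘F)_n`
the composition `(1, …, 1)` contributes `G_n(z) ∏ F₁(z_i)`, and every other composition only
involves some `G_k` with `k < n`, so `(G∘F)_n = id_n` can be solved for `G_n`. As
`(G∘F)₁ = G₁ F₁`, also `G₁` is nowhere zero, so `G` has a left inverse `H` in turn, and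
associativity gives `H = H∘(G∘F) = (H∘G)∘F = F`; hence `F∘G = H∘G = id`. Conversely,
`G₁ F₁ = (G∘F)₁ = 1` forces `F₁ ≠ 0`.

Associativity is proved as for formal multilinear series: `Composition.sigmaEquivSigmaPi`
matches a composition `a` of `n` together with a composition `b` of its blocks with the coarser
composition `a.gather b` together with a refinement of each of its blocks.
-/

/-- A transform: a sequence of functions `F_n : ℂⁿ → ℂ` for `n ≥ 1`
(the `n = 0` component is irrelevant). -/
def Transform := ∀ n : ℕ, (Fin n → ℂ) → ℂ

/-- The composite transform:
`(G∘F)_n(z₁,…,z_n) = Σ_{0=i₀<⋯<i_k=n} G_k(Σ_{block 1} z, …, Σ_{block k} z) ∏_j F_{|block j|}(z|_{block j})`. -/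
noncomputable def tComp (G F : Transform) : Transform := fun n z =>
  ∑ c : Composition n,
    G c.length (fun j => ∑ i, z (c.embedding j i)) *
      ∏ j, F (c.blocksFun j) (z ∘ c.embedding j)

/-- The identity transform: `id₁ ≡ 1`, `id_n ≡ 0` for `n ≠ 1`. -/
def tId : Transform := fun n _ => if n = 1 then 1 else 0

/-- `G` is a two-sided compositional inverse of the transform `F`. -/
def TInverse (F G : Transform) : Prop :=
  (∀ n : ℕ, 1 ≤ n → ∀ z : Fin n → ℂ, tComp G F n z = tId n z) ∧
  (∀ n : ℕ, 1 ≤ n → ∀ z : Fin n → ℂ, tComp F G n z = tId n z)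

theorem congr_fin_length {β : Type*} {α : Sort*} (Φ : ∀ m : ℕ, (Fin m → β) → α) {m₁ m₂ : ℕ}
    (h : m₁ = m₂) {v : Fin m₁ → β} {w : Fin m₂ → β}
    (hvw : ∀ (k : ℕ) (h₁ : k < m₁) (h₂ : k < m₂), v ⟨k, h₁⟩ = w ⟨k, h₂⟩) :
    Φ m₁ v = Φ m₂ w := by
  subst h
  congr 1
  exact funext fun k => hvw k k.2 k.2

namespace Composition

variable {β M : Type*} {n : ℕ}

theorem ones_embedding_val (j : Fin (ones n).length) (i : Fin ((ones n).blocksFun j)) :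
    ((ones n).embedding j i : ℕ) = j := by
  have hi : (i : ℕ) < 1 := ones_blocksFun n j ▸ i.2
  have hj : (j : ℕ) < n := j.2.trans_eq (ones_length n)
  rw [coe_embedding, ones_sizeUpTo]
  omega

theorem sum_ones_embedding [AddCommMonoid β] (z : Fin n → β) {k : ℕ}
    (h₁ : k < (ones n).length) (h₂ : k < n) :
    ∑ i, z ((ones n).embedding ⟨k, h₁⟩ i) = z ⟨k, h₂⟩ := by
  rw [congr_fin_length (fun m (v : Fin m → β) => ∑ i, v i) (ones_blocksFun n ⟨k, h₁⟩)
    (w := fun _ => z ⟨k, h₂⟩) fun _ _ _ => congrArg z (Fin.ext (ones_embedding_val _ _)),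
    Fin.sum_univ_one]

theorem prod_ones [CommMonoid M] (Φ : ∀ m : ℕ, (Fin m → β) → M) (z : Fin n → β) :
    ∏ j, Φ ((ones n).blocksFun j) (z ∘ (ones n).embedding j) = ∏ i, Φ 1 (fun _ => z i) := by
  refine congr_fin_length (fun m (v : Fin m → M) => ∏ i, v i) (ones_length n) fun k _ _ => ?_
  exact congr_fin_length Φ (ones_blocksFun n _)
    fun _ _ _ => congrArg z (Fin.ext (ones_embedding_val _ _))

section Gather

variable (a : Composition n) (b : Composition a.length)

theorem embedding_embedding_eq_gather {j i k : ℕ} (hj : j < b.length)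
    (hi : i < b.blocksFun ⟨j, hj⟩) (hj' : j < (a.gather b).length)
    (hi' : i < (a.sigmaCompositionAux b ⟨j, hj'⟩).length)
    (hk : k < a.blocksFun (b.embedding ⟨j, hj⟩ ⟨i, hi⟩))
    (hk' : k < (a.sigmaCompositionAux b ⟨j, hj'⟩).blocksFun ⟨i, hi'⟩) :
    a.embedding (b.embedding ⟨j, hj⟩ ⟨i, hi⟩) ⟨k, hk⟩ =
      (a.gather b).embedding ⟨j, hj'⟩
        ((a.sigmaCompositionAux b ⟨j, hj'⟩).embedding ⟨i, hi'⟩ ⟨k, hk'⟩) := by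
  ext
  simp only [coe_embedding, ← add_assoc, ← sizeUpTo_sizeUpTo_add a b hj hi]

theorem sum_embedding_eq_sigmaCompositionAux [AddCommMonoid β] (z : Fin n → β) {j i : ℕ}
    (hj : j < b.length) (hi : i < b.blocksFun ⟨j, hj⟩) (hj' : j < (a.gather b).length)
    (hi' : i < (a.sigmaCompositionAux b ⟨j, hj'⟩).length) :
    ∑ k, z (a.embedding (b.embedding ⟨j, hj⟩ ⟨i, hi⟩) k) =
      ∑ k, z ((a.gather b).embedding ⟨j, hj'⟩
          ((a.sigmaCompositionAux b ⟨j, hj'⟩).embedding ⟨i, hi'⟩ k)) :=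
  congr_fin_length (fun m (v : Fin m → β) => ∑ k, v k)
    (blocksFun_sigmaCompositionAux a b ⟨j, hj⟩ ⟨i, hi⟩).symm
    fun _ hk hk' => congrArg z (embedding_embedding_eq_gather a b hj hi hj' hi' hk hk')

theorem sum_sum_embedding_eq_gather [AddCommMonoid β] (z : Fin n → β) {j : ℕ}
    (hj : j < b.length) (hj' : j < (a.gather b).length) :
    ∑ i, ∑ k, z (a.embedding (b.embedding ⟨j, hj⟩ i) k) =
      ∑ i, z ((a.gather b).embedding ⟨j, hj'⟩ i) := by
  rw [← ((a.sigmaCompositionAux b ⟨j, hj'⟩).blocksFinEquiv).sum_comp, ← Finset.univ_sigma_univ,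
    Finset.sum_sigma]
  exact congr_fin_length (fun m (v : Fin m → β) => ∑ i, v i)
    (length_sigmaCompositionAux a b ⟨j, hj⟩).symm
    fun _ hi hi' => sum_embedding_eq_sigmaCompositionAux a b z hj hi hj' hi'

theorem prod_blocks_eq_prod_sigmaCompositionAux [CommMonoid M] (Φ : ∀ m : ℕ, (Fin m → β) → M)
    (z : Fin n → β) :
    ∏ k, Φ (a.blocksFun k) (z ∘ a.embedding k) =
      ∏ j, ∏ i, Φ ((a.sigmaCompositionAux b j).blocksFun i)
          ((z ∘ (a.gather b).embedding j) ∘ (a.sigmaCompositionAux b j).embedding i) := by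
  rw [← b.blocksFinEquiv.prod_comp, ← Finset.univ_sigma_univ, Finset.prod_sigma]
  refine congr_fin_length (fun m (v : Fin m → M) => ∏ j, v j) (length_gather a b).symm
    fun j hj hj' => ?_
  refine congr_fin_length (fun m (v : Fin m → M) => ∏ i, v i)
    (length_sigmaCompositionAux a b ⟨j, hj⟩).symm fun i hi hi' => ?_
  exact congr_fin_length Φ (blocksFun_sigmaCompositionAux a b ⟨j, hj⟩ ⟨i, hi⟩).symm
    fun _ hk hk' => congrArg z (embedding_embedding_eq_gather a b hj hi hj' hi' hk hk')

end Gather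

end Composition

theorem tId_one (v : Fin 1 → ℂ) : tId 1 v = 1 := if_pos rfl

theorem tId_of_ne_one {n : ℕ} (hn : n ≠ 1) (v : Fin n → ℂ) : tId n v = 0 := if_neg hn

theorem tComp_congr_left {G G' : Transform} (F : Transform)
    (h : ∀ m, 1 ≤ m → ∀ v : Fin m → ℂ, G m v = G' m v) {n : ℕ} (hn : 1 ≤ n) (z : Fin n → ℂ) :
    tComp G F n z = tComp G' F n z :=
  Finset.sum_congr rfl fun c _ => by rw [h c.length (c.length_pos_of_pos hn)]

theorem tComp_congr_right (G : Transform) {F F' : Transform}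
    (h : ∀ m, 1 ≤ m → ∀ v : Fin m → ℂ, F m v = F' m v) {n : ℕ} (z : Fin n → ℂ) :
    tComp G F n z = tComp G F' n z :=
  Finset.sum_congr rfl fun c _ => by
    rw [Finset.prod_congr rfl fun j _ => h _ (c.one_le_blocksFun j) _]

theorem tComp_eq_add_sum_length_lt (G F : Transform) {n : ℕ} (z : Fin n → ℂ) :
    tComp G F n z = G n z * ∏ i, F 1 (fun _ => z i) +
      ∑ c : Composition n with c.length < n,
        G c.length (fun j => ∑ i, z (c.embedding j i)) *
          ∏ j, F (c.blocksFun j) (z ∘ c.embedding j) := by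
  have hones : ({c : Composition n | ¬c.length < n} : Finset _) = {Composition.ones n} := by
    ext c
    simp [Composition.eq_ones_iff_le_length]
  rw [tComp, ← Finset.sum_filter_not_add_sum_filter _ (fun c : Composition n => c.length < n),
    hones, Finset.sum_singleton, Composition.prod_ones F z]
  congr 2
  exact congr_fin_length G (Composition.ones_length n) fun _ => Composition.sum_ones_embedding z

theorem tComp_one (G F : Transform) (v : Fin 1 → ℂ) : tComp G F 1 v = G 1 v * F 1 v := by
  have hv : (fun _ => v 0) = v := funext fun i => congrArg v (Subsingleton.elim 0 i)
  rw [tComp_eq_add_sum_length_lt, Fin.prod_univ_one, hv, add_eq_left]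
  refine Finset.sum_eq_zero fun c hc => absurd (Finset.mem_filter.mp hc).2 ?_
  exact not_lt.mpr (c.length_pos_of_pos one_pos)

theorem tComp_tId_left (F : Transform) {n : ℕ} (hn : 1 ≤ n) (z : Fin n → ℂ) :
    tComp tId F n z = F n z := by
  rw [tComp, Finset.sum_eq_single (Composition.single n hn)]
  · simp only [tId, Composition.single_length, if_true, one_mul]
    refine (Fin.prod_univ_one _).trans ?_
    exact congr_fin_length F (Composition.single_blocksFun hn _)
      fun k _ _ => congrArg z (Fin.ext (zero_add k))
  · intro c _ hc
    simp [tId, ← Composition.eq_single_iff_length hn, hc]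
  · simp

theorem tComp_tId_right (G : Transform) {n : ℕ} (z : Fin n → ℂ) :
    tComp G tId n z = G n z := by
  rw [tComp_eq_add_sum_length_lt, Finset.prod_eq_one fun _ _ => tId_one _, mul_one,
    add_eq_left]
  refine Finset.sum_eq_zero fun c hc => ?_
  obtain ⟨k, hk, hk_gt⟩ := Composition.ne_ones_iff.mp
    (mt Composition.eq_ones_iff_le_length.mp (not_le.mpr (Finset.mem_filter.mp hc).2))
  rw [← Composition.ofFn_blocksFun, List.mem_ofFn] at hk
  obtain ⟨j, rfl⟩ := hk
  exact mul_eq_zero_of_right _ (Finset.prod_eq_zero (Finset.mem_univ j) (tId_of_ne_one hk_gt.ne' _))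

theorem tComp_assoc (H G F : Transform) (n : ℕ) (z : Fin n → ℂ) :
    tComp (tComp H G) F n z = tComp H (tComp G F) n z := by
  simp only [tComp, Finset.sum_mul, Fintype.prod_sum, Finset.mul_sum, Finset.prod_mul_distrib]
  rw [Finset.sum_sigma', Finset.sum_sigma', Finset.univ_sigma_univ, Finset.univ_sigma_univ,
    ← (Composition.sigmaEquivSigmaPi n).sum_comp]
  refine Finset.sum_congr rfl fun ⟨a, b⟩ _ => ?_
  dsimp only [Composition.sigmaEquivSigmaPi, Equiv.coe_fn_mk]
  rw [mul_assoc, a.prod_blocks_eq_prod_sigmaCompositionAux b F z]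
  congr 1
  · exact congr_fin_length H (Composition.length_gather a b).symm
      fun _ hj hj' => a.sum_sum_embedding_eq_gather b z hj hj'
  congr 1
  refine congr_fin_length (fun m (v : Fin m → ℂ) => ∏ j, v j) (Composition.length_gather a b).symm
    fun j hj hj' => ?_
  exact congr_fin_length G (Composition.length_sigmaCompositionAux a b ⟨j, hj⟩).symm
    fun _ hi hi' => a.sum_embedding_eq_sigmaCompositionAux b z hj hi hj' hi'

theorem tComp_left_inv_eq_right_inv {H G F : Transform}
    (hHG : ∀ n, 1 ≤ n → ∀ z : Fin n → ℂ, tComp H G n z = tId n z)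
    (hGF : ∀ n, 1 ≤ n → ∀ z : Fin n → ℂ, tComp G F n z = tId n z)
    (n : ℕ) (hn : 1 ≤ n) (z : Fin n → ℂ) : H n z = F n z :=
  calc H n z = tComp H tId n z := (tComp_tId_right H z).symm
    _ = tComp H (tComp G F) n z := tComp_congr_right H (fun m hm v => (hGF m hm v).symm) z
    _ = tComp (tComp H G) F n z := (tComp_assoc H G F n z).symm
    _ = tComp tId F n z := tComp_congr_left F hHG hn z
    _ = F n z := tComp_tId_left F hn z

theorem apply_one_mul_apply_one_eq_one {G F : Transform} {v : Fin 1 → ℂ}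
    (h : tComp G F 1 v = tId 1 v) : G 1 v * F 1 v = 1 := by
  rw [← tComp_one, h, tId_one]

noncomputable def tLeftInv (F : Transform) : Transform
  | n, z =>
    (tId n z - ∑ c : Composition n,
        if c.length < n then
          tLeftInv F c.length (fun j => ∑ i, z (c.embedding j i)) *
            ∏ j, F (c.blocksFun j) (z ∘ c.embedding j)
        else 0) /
      ∏ i, F 1 (fun _ => z i)

theorem tLeftInv_apply (F : Transform) (n : ℕ) (z : Fin n → ℂ) :
    tLeftInv F n z =
      (tId n z - ∑ c : Composition n with c.length < n,
          tLeftInv F c.length (fun j => ∑ i, z (c.embedding j i)) *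
            ∏ j, F (c.blocksFun j) (z ∘ c.embedding j)) /
        ∏ i, F 1 (fun _ => z i) := by
  rw [tLeftInv, Finset.sum_filter]

theorem tComp_tLeftInv {F : Transform} (hF : ∀ v : Fin 1 → ℂ, F 1 v ≠ 0) (n : ℕ)
    (z : Fin n → ℂ) : tComp (tLeftInv F) F n z = tId n z := by
  have hprod : ∏ i, F 1 (fun _ => z i) ≠ 0 := Finset.prod_ne_zero_iff.mpr fun i _ => hF _
  rw [tComp_eq_add_sum_length_lt, tLeftInv_apply, div_mul_cancel₀ _ hprod, sub_add_cancel]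

/-- a transform `F` is invertible iff `F₁ : ℂ → ℂ` is nowhere vanishing. -/
theorem stmt15 (F : Transform) :
    (∃ G : Transform, TInverse F G) ↔ ∀ v : Fin 1 → ℂ, F 1 v ≠ 0 := by
  constructor
  · rintro ⟨G, hGF, -⟩ v
    exact right_ne_zero_of_mul_eq_one (apply_one_mul_apply_one_eq_one (hGF 1 le_rfl v))
  · intro hF
    set G := tLeftInv F
    have hGF : ∀ n z, tComp G F n z = tId n z := tComp_tLeftInv hF
    have hHG := tComp_tLeftInv fun v =>
      left_ne_zero_of_mul_eq_one (apply_one_mul_apply_one_eq_one (hGF 1 v))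
    have hHF := tComp_left_inv_eq_right_inv (fun n _ => hHG n) (fun n _ => hGF n)
    refine ⟨G, fun n _ => hGF n, fun n hn z => ?_⟩
    exact (tComp_congr_left G (fun m hm v => (hHF m hm v).symm) hn z).trans (hHG n z)
end

section
/- If F is an invertible Lie transform, then its inverse transform F⁻¹ is also a Lie transform. -/
attribute [local instance 100] LieRing.ofAssociativeRing

/-- A transform `F` is a Lie transform if each symmetrised sum
`Σ_σ F_n(z_{σ(1)},…,z_{σ(n)}) x_{σ(1)} ⋯ x_{σ(n)}` in the free associative algebra on
`x₁,…,x_n` lies in the Lie subalgebra generated by the `x_i` (under the commutator). -/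
def IsLieTransform (F : Transform) : Prop :=
  ∀ n : ℕ, 1 ≤ n → ∀ z : Fin n → ℂ,
    (∑ σ : Equiv.Perm (Fin n),
        F n (z ∘ σ) • (List.ofFn fun i => FreeAlgebra.ι ℂ (σ i)).prod) ∈
      LieSubalgebra.lieSpan ℂ (FreeAlgebra ℂ (Fin n)) (Set.range (FreeAlgebra.ι ℂ))

/-! Symmetrise `(G ∘ F)_n = id_n` over all orderings of the variables and group the resulting
pairs (composition, permutation) by the set partition of `Fin n` they induce. A class with
`k < n` blocks is the image of the symmetrised `G_k` under the algebra map sending the `j`-th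
generator to the symmetrised `F` on the `j`-th block; algebra maps sending generators to Lie
elements preserve Lie elements, so these classes are Lie by induction on `n`. The remaining
class, the partition into singletons, is `∏ᵢ F₁(zᵢ)` times the symmetrised `G_n`, and `F₁` never
vanishes because `G₁ F₁ = 1`. -/

open Equiv FreeAlgebra

theorem List.prod_ofFn_smul {R A : Type*} [CommSemiring R] [Semiring A] [Algebra R A] :
    ∀ {m : ℕ} (a : Fin m → R) (x : Fin m → A),
      (List.ofFn fun j => a j • x j).prod = (∏ j, a j) • (List.ofFn x).prod
  | 0, a, x => by simp
  | m + 1, a, x => by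
    rw [List.ofFn_succ, List.ofFn_succ, List.prod_cons, List.prod_cons,
      List.prod_ofFn_smul (fun j => a j.succ) (fun j => x j.succ), Fin.prod_univ_succ,
      smul_mul_smul_comm]

theorem List.prod_ofFn_sum {A : Type*} [Semiring A] :
    ∀ {m : ℕ} (κ : Fin m → Type*) [∀ j, Fintype (κ j)] (f : ∀ j, κ j → A),
      (List.ofFn fun j => ∑ x : κ j, f j x).prod
        = ∑ T : ∀ j, κ j, (List.ofFn fun j => f j (T j)).prod
  | 0, κ, _, f => by simp
  | m + 1, κ, _, f => by
    rw [List.ofFn_succ, List.prod_cons,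
      List.prod_ofFn_sum (fun j => κ j.succ) (fun j x => f j.succ x), Finset.sum_mul_sum,
      ← Fintype.sum_prod_type']
    refine Fintype.sum_equiv (Fin.consEquiv κ) _ _ fun p => ?_
    simp [Fin.consEquiv, List.ofFn_succ]

theorem List.sum_take_add_lt_sum (bs : List ℕ) (j : Fin bs.length) (i : Fin bs[(j : ℕ)]) :
    (bs.take j).sum + i < bs.sum := by
  have h := List.sum_take_succ bs j j.isLt
  have := congrArg List.sum (List.take_append_drop ((j : ℕ) + 1) bs)
  rw [List.sum_append] at this
  omega

theorem List.prod_ofFn_eq_prod_ofFn_blocks {M : Type*} [Monoid M] :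
    ∀ (bs : List ℕ) {n : ℕ} (h : bs.sum = n) (g : Fin n → M),
      (List.ofFn g).prod =
        (List.ofFn fun j : Fin bs.length =>
          (List.ofFn fun i : Fin bs[(j : ℕ)] =>
            g ⟨(bs.take j).sum + i, h ▸ List.sum_take_add_lt_sum bs j i⟩).prod).prod
  | [], n, h, g => by
    obtain rfl : n = 0 := h.symm
    simp
  | b :: bs, n, h, g => by
    obtain rfl : n = b + bs.sum := h.symm
    rw [List.ofFn_add, List.prod_append,
      List.prod_ofFn_eq_prod_ofFn_blocks bs rfl, List.ofFn_succ, List.prod_cons]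
    congr 2
    · simp only [Fin.val_zero, List.take_zero, List.sum_nil, Nat.zero_add]
      rfl
    · congr 1
      funext j
      simp only [List.take_succ_cons, List.sum_cons, Fin.val_succ, Nat.add_assoc]
      rfl

theorem Composition.prod_ofFn_eq_prod_ofFn_embedding {M : Type*} [Monoid M] {n : ℕ}
    (c : Composition n) (g : Fin n → M) :
    (List.ofFn g).prod =
      (List.ofFn fun j => (List.ofFn fun i => g (c.embedding j i)).prod).prod :=
  c.blocks.prod_ofFn_eq_prod_ofFn_blocks c.blocks_sum g

theorem Transform.congr_cast (H : Transform) {m m' : ℕ} (h : m = m') {f : Fin m → ℂ}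
    {g : Fin m' → ℂ} (hfg : ∀ i, f (Fin.cast h.symm i) = g i) : H m f = H m' g := by
  subst h
  exact congrArg _ (funext hfg)

theorem FreeAlgebra.lift_mem_of_mem_lieSpan {R X A : Type*} [CommRing R] [Ring A] [Algebra R A]
    (K : LieSubalgebra R A) {Y : X → A} (hY : ∀ x, Y x ∈ K) {a : FreeAlgebra R X}
    (ha : a ∈ LieSubalgebra.lieSpan R (FreeAlgebra R X) (Set.range (ι R))) :
    lift R Y a ∈ K := by
  have : LieSubalgebra.lieSpan R (FreeAlgebra R X) (Set.range (ι R)) ≤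
      K.comap (lift R Y).toLieHom := by
    rw [LieSubalgebra.lieSpan_le]
    rintro _ ⟨x, rfl⟩
    simpa using hY x
  exact this ha

section SymmetrisedSum

noncomputable def word {X : Type*} {m : ℕ} (f : Fin m → X) : FreeAlgebra ℂ X :=
  (List.ofFn fun i => ι ℂ (f i)).prod

noncomputable def symmSum (H : Transform) (n : ℕ) (z : Fin n → ℂ) : FreeAlgebra ℂ (Fin n) :=
  ∑ σ : Perm (Fin n), H n (z ∘ σ) • word σ

abbrev freeLie (n : ℕ) : LieSubalgebra ℂ (FreeAlgebra ℂ (Fin n)) :=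
  LieSubalgebra.lieSpan ℂ (FreeAlgebra ℂ (Fin n)) (Set.range (ι ℂ))

theorem isLieTransform_iff {H : Transform} :
    IsLieTransform H ↔ ∀ n, 1 ≤ n → ∀ z, symmSum H n z ∈ freeLie n :=
  Iff.rfl

variable {A : Type*} [Ring A] [Algebra ℂ A]

theorem lift_symmSum {k : ℕ} (Y : Fin k → A) (H : Transform) (w : Fin k → ℂ) :
    lift ℂ Y (symmSum H k w) =
      ∑ σ : Perm (Fin k), H k (w ∘ σ) • (List.ofFn fun i => Y (σ i)).prod := by
  simp only [symmSum, word, map_sum, map_smul, map_list_prod, List.map_ofFn, Function.comp_def,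
    lift_ι_apply]

theorem sum_smul_prod_mem_of_symmSum_mem (K : LieSubalgebra ℂ A) {H : Transform} {k : ℕ}
    {w : Fin k → ℂ} (hH : symmSum H k w ∈ freeLie k) {Y : Fin k → A} (hY : ∀ j, Y j ∈ K) :
    ∑ σ : Perm (Fin k), H k (w ∘ σ) • (List.ofFn fun i => Y (σ i)).prod ∈ K :=
  lift_symmSum Y H w ▸ lift_mem_of_mem_lieSpan K hY hH

end SymmetrisedSum

theorem isLieTransform_tId : IsLieTransform tId := by
  intro n _ z
  refine sum_mem fun σ _ => ?_
  by_cases hn : n = 1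
  · subst hn
    have : ι ℂ (σ 0) ∈ freeLie 1 := LieSubalgebra.subset_lieSpan ⟨σ 0, rfl⟩
    simpa [tId] using this
  · simp [tId, hn]

section Expansion

variable {n : ℕ}

noncomputable def compTerm (G F : Transform) (z : Fin n → ℂ)
    (p : Composition n × Perm (Fin n)) : ℂ :=
  G p.1.length (fun j => ∑ i, z (p.2 (p.1.embedding j i))) *
    ∏ j, F (p.1.blocksFun j) (fun i => z (p.2 (p.1.embedding j i)))

theorem tComp_comp_perm (G F : Transform) (z : Fin n → ℂ) (σ : Perm (Fin n)) :
    tComp G F n (z ∘ σ) = ∑ c, compTerm G F z (c, σ) :=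
  rfl

theorem symmSum_tComp (G F : Transform) (z : Fin n → ℂ) :
    symmSum (tComp G F) n z =
      ∑ p : Composition n × Perm (Fin n), compTerm G F z p • word p.2 := by
  simp only [symmSum, tComp_comp_perm, Finset.sum_smul, Fintype.sum_prod_type_right]

theorem Composition.ones_embedding_eq_cast (j : Fin (Composition.ones n).length)
    (i : Fin ((Composition.ones n).blocksFun j)) :
    (Composition.ones n).embedding j i = Fin.cast (Composition.ones_length n) j := by
  obtain rfl : i = ⟨0, (Composition.ones n).one_le_blocksFun j⟩ := by
    have : (i : ℕ) < 1 := Composition.ones_blocksFun n j ▸ i.isLt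
    exact Fin.ext (Nat.lt_one_iff.mp this)
  exact Composition.ones_embedding j _

theorem compTerm_ones (G F : Transform) (z : Fin n → ℂ) (σ : Perm (Fin n)) :
    compTerm G F z (Composition.ones n, σ) = (∏ i, F 1 (fun _ => z i)) * G n (z ∘ σ) := by
  simp only [compTerm, Composition.ones_embedding_eq_cast]
  rw [mul_comm]
  congr 1
  · rw [← Equiv.prod_comp σ (fun i => F 1 fun _ => z i)]
    refine Fintype.prod_equiv (finCongr (Composition.ones_length n)) _ _ fun j => ?_
    exact F.congr_cast (Composition.ones_blocksFun n j) fun _ => rfl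
  · refine G.congr_cast (Composition.ones_length n) fun j => ?_
    simp

end Expansion

theorem TInverse.apply_one_ne_zero {F G : Transform} (h : TInverse F G) (y : Fin 1 → ℂ) :
    F 1 y ≠ 0 := by
  have hone : ∀ c : Composition 1, c = Composition.ones 1 := fun c =>
    Composition.eq_ones_iff_length.mpr (le_antisymm c.length_le (c.length_pos_of_pos one_pos))
  have := h.1 1 le_rfl y
  rw [← Function.comp_id y, ← Perm.coe_one, tComp_comp_perm,
    Fintype.sum_eq_single (Composition.ones 1) fun c hc => absurd (hone c) hc,
    compTerm_ones] at this
  have hy : (fun _ : Fin 1 => y 0) = y := funext fun i => congrArg y (Subsingleton.elim 0 i)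
  intro h0
  simp [hy, h0, tId] at this

theorem Function.Injective.exists_equiv_of_range_eq {ι ι' α : Type*} {e : ι → α} {e' : ι' → α}
    (he : Function.Injective e) (he' : Function.Injective e') (h : Set.range e = Set.range e') :
    ∃ τ : ι ≃ ι', ∀ i, e' (τ i) = e i :=
  ⟨(Equiv.ofInjective e he).trans ((Equiv.setCongr h).trans (Equiv.ofInjective e' he').symm),
    fun i => by simp [Equiv.apply_ofInjective_symm]⟩

namespace Composition

variable {n : ℕ}

def blockImage (c : Composition n) (σ : Perm (Fin n)) (j : Fin c.length) : Finset (Fin n) :=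
  Finset.univ.image fun i => σ (c.embedding j i)

def setPartition (c : Composition n) (σ : Perm (Fin n)) : Finset (Finset (Fin n)) :=
  Finset.univ.image (c.blockImage σ)

variable {c : Composition n} {σ : Perm (Fin n)}

theorem mem_blockImage {j : Fin c.length} {x : Fin n} :
    x ∈ c.blockImage σ j ↔ ∃ i, σ (c.embedding j i) = x := by
  simp [blockImage]

theorem coe_blockImage (j : Fin c.length) :
    (c.blockImage σ j : Set (Fin n)) = Set.range fun i => σ (c.embedding j i) := by
  simp [blockImage]

theorem card_blockImage (j : Fin c.length) : (c.blockImage σ j).card = c.blocksFun j := by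
  rw [blockImage, Finset.card_image_of_injective _ fun _ _ h => (c.embedding j).injective
    (σ.injective h), Finset.card_univ, Fintype.card_fin]

theorem eq_of_mem_blockImage {j j' : Fin c.length} {x : Fin n} (h : x ∈ c.blockImage σ j)
    (h' : x ∈ c.blockImage σ j') : j = j' := by
  obtain ⟨i, rfl⟩ := mem_blockImage.1 h
  obtain ⟨i', hi'⟩ := mem_blockImage.1 h'
  rw [← c.index_embedding j i, ← c.index_embedding j' i', σ.injective hi']

theorem blockImage_injective : Function.Injective (c.blockImage σ) := fun j j' h => by
  have hx : σ (c.embedding j ⟨0, c.one_le_blocksFun j⟩) ∈ c.blockImage σ j :=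
    mem_blockImage.2 ⟨_, rfl⟩
  exact eq_of_mem_blockImage hx (h ▸ hx)

theorem card_setPartition : (c.setPartition σ).card = c.length := by
  rw [setPartition, Finset.card_image_of_injective _ blockImage_injective, Finset.card_univ,
    Fintype.card_fin]

theorem coe_setPartition :
    (c.setPartition σ : Set (Finset (Fin n))) = Set.range (c.blockImage σ) := by
  simp [setPartition]

def permBlocks (c : Composition n) (π : Perm (Fin c.length)) : Composition n where
  blocks := List.ofFn fun j => c.blocksFun (π j)
  blocks_pos {i} hi := by
    obtain ⟨j, rfl⟩ := List.mem_ofFn.1 hi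
    exact c.one_le_blocksFun _
  blocks_sum := by rw [List.sum_ofFn, Equiv.sum_comp π c.blocksFun, c.sum_blocksFun]

variable (c) (π : Perm (Fin c.length))

theorem length_permBlocks : (c.permBlocks π).length = c.length :=
  List.length_ofFn

theorem blocksFun_permBlocks (j : Fin (c.permBlocks π).length) :
    (c.permBlocks π).blocksFun j = c.blocksFun (π (Fin.cast (c.length_permBlocks π) j)) :=
  List.getElem_ofFn _

/-- The permutation listing, block after block, the `π j`-th block of `σ ∘ c.embedding`
reordered by `T (π j)`. -/
def relabel (σ : Perm (Fin n)) (T : ∀ j, Perm (Fin (c.blocksFun j))) : Perm (Fin n) :=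
  (c.permBlocks π).blocksFinEquiv.symm.trans <|
    ((Equiv.sigmaCongr (finCongr (c.length_permBlocks π))
        fun j => finCongr (c.blocksFun_permBlocks π j)).trans <|
      (Equiv.sigmaCongrRight fun j => T (π j)).trans <|
        (Equiv.sigmaCongr π fun _ => Equiv.refl _).trans c.blocksFinEquiv).trans σ

theorem relabel_embedding (σ : Perm (Fin n)) (T : ∀ j, Perm (Fin (c.blocksFun j)))
    (j : Fin (c.permBlocks π).length) (i : Fin ((c.permBlocks π).blocksFun j)) :
    c.relabel π σ T ((c.permBlocks π).embedding j i) =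
      σ (c.embedding (π (Fin.cast (c.length_permBlocks π) j))
        (T _ (Fin.cast (c.blocksFun_permBlocks π j) i))) := by
  have : (c.permBlocks π).blocksFinEquiv.symm ((c.permBlocks π).embedding j i) = ⟨j, i⟩ :=
    (c.permBlocks π).blocksFinEquiv.symm_apply_eq.mpr rfl
  simp only [relabel, Equiv.trans_apply, this]
  rfl

theorem blockImage_relabel (σ : Perm (Fin n)) (T : ∀ j, Perm (Fin (c.blocksFun j)))
    (j : Fin (c.permBlocks π).length) :
    (c.permBlocks π).blockImage (c.relabel π σ T) j =
      c.blockImage σ (π (Fin.cast (c.length_permBlocks π) j)) := by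
  ext x
  simp only [mem_blockImage, relabel_embedding]
  constructor
  · rintro ⟨i, rfl⟩
    exact ⟨_, rfl⟩
  · rintro ⟨i, rfl⟩
    refine ⟨Fin.cast (c.blocksFun_permBlocks π j).symm ((T _).symm i), ?_⟩
    simp

theorem setPartition_relabel (σ : Perm (Fin n)) (T : ∀ j, Perm (Fin (c.blocksFun j))) :
    (c.permBlocks π).setPartition (c.relabel π σ T) = c.setPartition σ := by
  apply Finset.coe_injective
  rw [coe_setPartition, coe_setPartition, funext (c.blockImage_relabel π σ T)]
  exact (π.surjective.comp (finCongr (c.length_permBlocks π)).surjective).range_comp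
    (c.blockImage σ)

theorem index_relabel (σ : Perm (Fin n)) (T : ∀ j, Perm (Fin (c.blocksFun j))) (x : Fin n) :
    c.index (σ.symm (c.relabel π σ T x)) =
      π (Fin.cast (c.length_permBlocks π) ((c.permBlocks π).index x)) := by
  conv_lhs => rw [← (c.permBlocks π).embedding_comp_inv x]
  rw [relabel_embedding, σ.symm_apply_apply, index_embedding]

theorem relabel_injective (σ : Perm (Fin n)) :
    Function.Injective fun g : Perm (Fin c.length) × (∀ j, Perm (Fin (c.blocksFun j))) =>
      (c.permBlocks g.1, c.relabel g.1 σ g.2) := by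
  rintro ⟨π, T⟩ ⟨π', T'⟩ h
  obtain ⟨hc, hσ⟩ := Prod.mk.inj h
  obtain rfl : π = π' := by
    ext j₀ : 1
    let x := (c.permBlocks π).embedding (Fin.cast (c.length_permBlocks π).symm j₀)
      ⟨0, (c.permBlocks π).one_le_blocksFun _⟩
    have hidx : ∀ d d' : Composition n, d = d' → (d.index x : ℕ) = d'.index x := by
      rintro _ _ rfl
      rfl
    have h1 := c.index_relabel π σ T x
    rw [hσ, c.index_relabel π' σ T' x] at h1
    convert h1.symm using 2 <;> ext
    · simp [x]
    · simp [← hidx _ _ hc, x]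
  have hT : ∀ j i, T (π j) i = T' (π j) i := fun j i => by
    have := DFunLike.congr_fun hσ ((c.permBlocks π).embedding
      (Fin.cast (c.length_permBlocks π).symm j) (Fin.cast (c.blocksFun_permBlocks π _).symm i))
    rw [relabel_embedding, relabel_embedding] at this
    exact (c.embedding _).injective (σ.injective this)
  refine Prod.ext rfl (funext fun j₀ => ?_)
  obtain ⟨j, rfl⟩ := π.surjective j₀
  exact Equiv.ext (hT j)

theorem exists_relabel_eq (σ : Perm (Fin n)) {c' : Composition n} {σ' : Perm (Fin n)}
    (h : c'.setPartition σ' = c.setPartition σ) :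
    ∃ (π : Perm (Fin c.length)) (T : ∀ j, Perm (Fin (c.blocksFun j))),
      (c.permBlocks π, c.relabel π σ T) = (c', σ') := by
  obtain ⟨ρ, hρ⟩ := (blockImage_injective (c := c) (σ := σ)).exists_equiv_of_range_eq
    (blockImage_injective (c := c') (σ := σ'))
    (by rw [← coe_setPartition, ← coe_setPartition, h])
  have hlen : c'.length = c.length := (Fin.equiv_iff_eq.mp ⟨ρ⟩).symm
  obtain ⟨π, hπ⟩ : ∃ π : Perm (Fin c.length),
      ∀ j, c.blockImage σ (π (Fin.cast hlen j)) = c'.blockImage σ' j :=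
    ⟨(finCongr hlen).symm.trans ρ.symm, fun j => by simp [← hρ]⟩
  obtain rfl : c.permBlocks π = c' := by
    refine Composition.ext ((List.ext_getElem (by simp [permBlocks, hlen]) fun k h₁ h₂ => ?_).trans
      c'.ofFn_blocksFun)
    simp only [permBlocks, List.getElem_ofFn]
    rw [← card_blockImage (c := c') (σ := σ'), ← hπ, card_blockImage]
    rfl
  have hsz : ∀ j₀, c.blocksFun j₀ =
      (c.permBlocks π).blocksFun (Fin.cast (c.length_permBlocks π).symm (π.symm j₀)) := by
    simp [blocksFun_permBlocks]
  have hT : ∀ j₀, ∃ τ : Perm (Fin (c.blocksFun j₀)), ∀ i,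
      σ (c.embedding j₀ (τ i)) = σ' ((c.permBlocks π).embedding
        (Fin.cast (c.length_permBlocks π).symm (π.symm j₀)) (Fin.cast (hsz j₀) i)) := fun j₀ => by
    refine Function.Injective.exists_equiv_of_range_eq
      (fun _ _ h => Fin.cast_injective _ ((embedding _ _).injective (σ'.injective h)))
      (fun _ _ h => (c.embedding j₀).injective (σ.injective h)) ?_
    refine ((finCongr (hsz j₀)).surjective.range_comp
      fun i => σ' ((c.permBlocks π).embedding _ i)).trans ?_
    rw [← coe_blockImage, ← coe_blockImage, ← hπ]
    simp
  choose T hT using hT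
  refine ⟨π, T, Prod.ext rfl (Equiv.ext fun x => ?_)⟩
  obtain ⟨⟨j, i⟩, rfl⟩ := (c.permBlocks π).blocksFinEquiv.surjective x
  simp only [blocksFinEquiv, Equiv.coe_fn_mk, relabel_embedding, hT]
  congr 1
  ext
  simp [coe_embedding]

theorem sum_filter_setPartition_eq {M : Type*} [AddCommMonoid M] (σ : Perm (Fin n))
    (f : Composition n × Perm (Fin n) → M) :
    ∑ q with q.1.setPartition q.2 = c.setPartition σ, f q =
      ∑ g : Perm (Fin c.length) × (∀ j, Perm (Fin (c.blocksFun j))),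
        f (c.permBlocks g.1, c.relabel g.1 σ g.2) := by
  refine (Finset.sum_bij (fun g _ => (c.permBlocks g.1, c.relabel g.1 σ g.2))
    (fun g _ => ?_) (fun _ _ _ _ h => c.relabel_injective σ h) (fun q hq => ?_)
    (fun _ _ => rfl)).symm
  · simp [setPartition_relabel]
  · obtain ⟨π, T, h⟩ := c.exists_relabel_eq σ (Finset.mem_filter.1 hq).2
    exact ⟨(π, T), Finset.mem_univ _, h⟩

end Composition

section Substitution

variable {n : ℕ} (c : Composition n) (π : Perm (Fin c.length)) (σ : Perm (Fin n))
  (T : ∀ j, Perm (Fin (c.blocksFun j)))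

theorem compTerm_permBlocks_relabel (G F : Transform) (z : Fin n → ℂ) :
    compTerm G F z (c.permBlocks π, c.relabel π σ T) =
      G c.length ((fun j => ∑ i, z (σ (c.embedding j i))) ∘ π) *
        ∏ j, F (c.blocksFun (π j)) ((fun i => z (σ (c.embedding (π j) i))) ∘ T (π j)) := by
  simp only [compTerm, c.relabel_embedding]
  congr 1
  · refine G.congr_cast (c.length_permBlocks π) fun j => ?_
    exact Fintype.sum_equiv ((finCongr (c.blocksFun_permBlocks π _)).trans (T _)) _ _
      fun _ => rfl
  · refine Fintype.prod_equiv (finCongr (c.length_permBlocks π)) _ _ fun j => ?_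
    exact F.congr_cast (c.blocksFun_permBlocks π j) fun _ => rfl

theorem word_relabel :
    word (c.relabel π σ T) =
      (List.ofFn fun j => word fun i => σ (c.embedding (π j) (T (π j) i))).prod := by
  rw [word, (c.permBlocks π).prod_ofFn_eq_prod_ofFn_embedding,
    List.ofFn_congr (c.length_permBlocks π)]
  refine congrArg List.prod (congrArg List.ofFn (funext fun j => ?_))
  rw [List.ofFn_congr (c.blocksFun_permBlocks π _)]
  simp only [c.relabel_embedding]
  rfl

noncomputable def blockSum (F : Transform) (z : Fin n → ℂ) (j : Fin c.length) :
    FreeAlgebra ℂ (Fin n) :=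
  ∑ τ : Perm (Fin (c.blocksFun j)),
    F _ ((fun i => z (σ (c.embedding j i))) ∘ τ) • word fun i => σ (c.embedding j (τ i))

theorem blockSum_mem {F : Transform} (hF : IsLieTransform F) (z : Fin n → ℂ) (j : Fin c.length) :
    blockSum c σ F z j ∈ freeLie n :=
  sum_smul_prod_mem_of_symmSum_mem (freeLie n) (hF _ (c.one_le_blocksFun j) _)
    (Y := fun i => ι ℂ (σ (c.embedding j i))) fun _ => LieSubalgebra.subset_lieSpan ⟨_, rfl⟩

theorem prod_ofFn_blockSum (F : Transform) (z : Fin n → ℂ) :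
    (List.ofFn fun j => blockSum c σ F z (π j)).prod =
      ∑ T : ∀ j, Perm (Fin (c.blocksFun j)),
        (∏ j, F (c.blocksFun (π j)) ((fun i => z (σ (c.embedding (π j) i))) ∘ T (π j))) •
          (List.ofFn fun j => word fun i => σ (c.embedding (π j) (T (π j) i))).prod := by
  simp only [blockSum]
  rw [List.prod_ofFn_sum (fun j => Perm (Fin (c.blocksFun (π j))))
    fun j τ => F _ ((fun i => z (σ (c.embedding (π j) i))) ∘ τ) •
      word fun i => σ (c.embedding (π j) (τ i))]
  simp only [List.prod_ofFn_smul]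
  exact (Fintype.sum_equiv (Equiv.piCongrLeft' (fun j => Perm (Fin (c.blocksFun j))) π.symm)
    _ _ fun _ => rfl).symm

theorem sum_compTerm_relabel (G F : Transform) (z : Fin n → ℂ) :
    ∑ g : Perm (Fin c.length) × (∀ j, Perm (Fin (c.blocksFun j))),
        compTerm G F z (c.permBlocks g.1, c.relabel g.1 σ g.2) • word (c.relabel g.1 σ g.2) =
      ∑ π : Perm (Fin c.length), G c.length ((fun j => ∑ i, z (σ (c.embedding j i))) ∘ π) •
        (List.ofFn fun j => blockSum c σ F z (π j)).prod := by
  simp only [Fintype.sum_prod_type, prod_ofFn_blockSum, Finset.smul_sum, smul_smul,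
    compTerm_permBlocks_relabel, word_relabel]

end Substitution

section Decomposition

variable {G F : Transform} {n : ℕ} (z : Fin n → ℂ)

theorem sum_filter_setPartition_mem (hF : IsLieTransform F) (c : Composition n) (σ : Perm (Fin n))
    (hG : symmSum G c.length (fun j => ∑ i, z (σ (c.embedding j i))) ∈ freeLie c.length) :
    ∑ q with q.1.setPartition q.2 = c.setPartition σ, compTerm G F z q • word q.2 ∈
      freeLie n := by
  rw [c.sum_filter_setPartition_eq σ, sum_compTerm_relabel]
  exact sum_smul_prod_mem_of_symmSum_mem (freeLie n) hG (blockSum_mem c σ hF z)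

theorem symmSum_tComp_sub_mem (hF : IsLieTransform F)
    (hG : ∀ k < n, 1 ≤ k → ∀ w, symmSum G k w ∈ freeLie k) :
    symmSum (tComp G F) n z - (∏ i, F 1 fun _ => z i) • symmSum G n z ∈ freeLie n := by
  set S := (Finset.univ.erase (Composition.ones n)) ×ˢ (Finset.univ : Finset (Perm (Fin n)))
  have hsplit : symmSum (tComp G F) n z =
      (∏ i, F 1 fun _ => z i) • symmSum G n z + ∑ p ∈ S, compTerm G F z p • word p.2 := by
    rw [symmSum_tComp, Fintype.sum_prod_type,
      ← Finset.add_sum_erase _ _ (Finset.mem_univ (Composition.ones n)), Finset.sum_product]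
    simp only [symmSum, compTerm_ones, Finset.smul_sum, mul_smul]
  rw [hsplit, add_sub_cancel_left, ← Finset.sum_fiberwise_of_maps_to
    (t := S.image fun p => p.1.setPartition p.2) fun p hp => Finset.mem_image_of_mem _ hp]
  refine sum_mem fun P hP => ?_
  obtain ⟨⟨c, σ⟩, hcσ, rfl⟩ := Finset.mem_image.1 hP
  have hlt : c.length < n := lt_of_le_of_ne c.length_le fun h =>
    (Finset.mem_erase.1 (Finset.mem_product.1 hcσ).1).1 (Composition.eq_ones_iff_length.2 h)
  -- a set partition determines its number of blocks, so a fibre meeting `S` lies in `S`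
  have hfiber : S.filter (fun q => q.1.setPartition q.2 = c.setPartition σ) =
      Finset.univ.filter (fun q => q.1.setPartition q.2 = c.setPartition σ) := by
    ext ⟨c', σ'⟩
    simp only [Finset.mem_filter, Finset.mem_univ, true_and, S, Finset.mem_product,
      Finset.mem_erase, and_true, and_iff_right_iff_imp]
    intro h
    rw [Ne, Composition.eq_ones_iff_length, ← Composition.card_setPartition (σ := σ'), h,
      Composition.card_setPartition]
    exact hlt.ne
  rw [hfiber]
  exact sum_filter_setPartition_mem z hF c σ (hG _ hlt (c.length_pos_of_pos (by omega)) _)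

end Decomposition

theorem stmt17_general (F : Transform) (hF : IsLieTransform F) :
    ∀ G : Transform, TInverse F G → IsLieTransform G := by
  intro G hFG
  rw [isLieTransform_iff]
  intro n
  induction n using Nat.strong_induction_on with
  | _ n IH =>
  intro hn z
  have hunit : (∏ i, F 1 fun _ => z i) ≠ 0 :=
    Finset.prod_ne_zero_iff.2 fun i _ => hFG.apply_one_ne_zero _
  have hcomp : symmSum (tComp G F) n z = symmSum tId n z := by
    simp only [symmSum, hFG.1 n hn]
  have hId : symmSum tId n z ∈ freeLie n := isLieTransform_tId n hn z
  have hsmul := sub_mem hId (symmSum_tComp_sub_mem z hF fun k hk => IH k hk)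
  rw [← hcomp, sub_sub_cancel] at hsmul
  rw [← inv_smul_smul₀ hunit (symmSum G n z)]
  exact (freeLie n).smul_mem _ hsmul

/-- the inverse of an invertible Lie transform is a Lie transform. -/
theorem stmt17 (F : Transform) (hF : IsLieTransform F)
    (hinv : ∃ G : Transform, TInverse F G) :
    ∀ G : Transform, TInverse F G → IsLieTransform G :=
  stmt17_general F hF
end
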